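/- arXiv:1505.05068 — 7 statements merged into one kernel-verified Lean document; each statement's English description precedes it below -/
import Mathlib

section
/- If X is a sub-uniform random variable, then for every α ∈ [0,1/2] one has P(X ≤ α) ≤ 2α. -/
open MeasureTheory Set

/-- A real-valued random variable `X` on a probability space `(Ω, P)` is *sub-uniform*
if it is dominated in the convex order by the uniform distribution `U` on `[0,1]`:
`E[h(X)] ≤ E[h(U)]` for every convex `h : ℝ → ℝ` for which both expectations exist.
(The expectation `E[h(X)]` exists, with a value in `(-∞, ∞]`, precisely when the
negative part of `h ∘ X` is integrable; in that case the inequality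
`E[h(X)] ≤ E[h(U)] < ∞` forces `h ∘ X` to be integrable.  The expectation `E[h(U)]`
always exists, since a convex function on `ℝ` is continuous, hence bounded on `[0,1]`.) -/
def SubUniform {Ω : Type*} [MeasurableSpace Ω] (P : Measure Ω) (X : Ω → ℝ) : Prop :=
  ∀ h : ℝ → ℝ, ConvexOn ℝ Set.univ h →
    Integrable (fun ω => max (-(h (X ω))) 0) P →
    Integrable (fun ω => h (X ω)) P ∧
      ∫ ω, h (X ω) ∂P ≤ ∫ x in Set.Icc (0:ℝ) 1, h x ∂volume

/-!
Test the convex order against the hinge function `x ↦ max (c - x) 0`, whose integral over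
`[0, 1]` is `c ^ 2 / 2` for `c ∈ [0, 1]`. By Markov's inequality this gives
`(c - α) P(X ≤ α) ≤ c ^ 2 / 2` for `α ≤ c`; the choice `c = 2α` yields the bound when `α > 0`,
and letting `c → 0` shows `P(X ≤ 0) = 0`.
-/

lemma convexOn_max_sub_zero (c : ℝ) : ConvexOn ℝ univ fun x : ℝ => max (c - x) 0 :=
  ((convexOn_const c convex_univ).sub (concaveOn_id convex_univ)).sup
    (convexOn_const 0 convex_univ)

lemma integral_Icc_zero_one_max_sub_zero {c : ℝ} (hc0 : 0 ≤ c) (hc1 : c ≤ 1) :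
    ∫ x in Icc (0:ℝ) 1, max (c - x) 0 = c ^ 2 / 2 := by
  have hcont : Continuous fun x : ℝ => max (c - x) 0 := by fun_prop
  rw [integral_Icc_eq_integral_Ioc, ← intervalIntegral.integral_of_le zero_le_one,
    ← intervalIntegral.integral_add_adjacent_intervals (b := c)
      (hcont.intervalIntegrable _ _) (hcont.intervalIntegrable _ _)]
  have hleft : ∫ x in (0:ℝ)..c, max (c - x) 0 = ∫ x in (0:ℝ)..c, (c - x) :=
    intervalIntegral.integral_congr fun x hx => by
      rw [uIcc_of_le hc0] at hx
      exact max_eq_left (by linarith [hx.2])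
  have hright : ∫ x in c..(1:ℝ), max (c - x) 0 = ∫ _ in c..(1:ℝ), (0:ℝ) :=
    intervalIntegral.integral_congr fun x hx => by
      rw [uIcc_of_le hc1] at hx
      exact max_eq_right (by linarith [hx.1])
  rw [hleft, hright, intervalIntegral.integral_sub intervalIntegrable_const
    (continuous_id'.intervalIntegrable _ _), integral_id, intervalIntegral.integral_const,
    intervalIntegral.integral_zero, smul_eq_mul]
  ring

namespace SubUniform

variable {Ω : Type*} [MeasurableSpace Ω] {P : Measure Ω} {X : Ω → ℝ}

lemma integrable_max_sub_zero_and_integral_le (hsub : SubUniform P X) (c : ℝ) :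
    Integrable (fun ω => max (c - X ω) 0) P ∧
      ∫ ω, max (c - X ω) 0 ∂P ≤ ∫ x in Icc (0:ℝ) 1, max (c - x) 0 := by
  refine hsub _ (convexOn_max_sub_zero c) ?_
  simp only [neg_nonpos.mpr (le_max_right _ _), max_eq_right]
  exact integrable_zero _ _ _

lemma mul_measureReal_le [IsFiniteMeasure P] (hsub : SubUniform P X) {α c : ℝ} (hαc : α ≤ c)
    (hc0 : 0 ≤ c) (hc1 : c ≤ 1) : (c - α) * P.real {ω | X ω ≤ α} ≤ c ^ 2 / 2 := by
  obtain ⟨hint, hle⟩ := hsub.integrable_max_sub_zero_and_integral_le c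
  have hsubset : {ω | X ω ≤ α} ⊆ {ω | c - α ≤ max (c - X ω) 0} := fun ω (hω : X ω ≤ α) =>
    le_max_of_le_left (sub_le_sub_left hω c)
  calc (c - α) * P.real {ω | X ω ≤ α}
      ≤ (c - α) * P.real {ω | c - α ≤ max (c - X ω) 0} :=
        mul_le_mul_of_nonneg_left (measureReal_mono hsubset) (sub_nonneg.mpr hαc)
    _ ≤ ∫ ω, max (c - X ω) 0 ∂P :=
        mul_meas_ge_le_integral_of_nonneg (ae_of_all _ fun _ => le_max_right _ _) hint _
    _ ≤ c ^ 2 / 2 := hle.trans_eq (integral_Icc_zero_one_max_sub_zero hc0 hc1)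

end SubUniform

theorem subUniform_cdf_le_general {Ω : Type*} [MeasurableSpace Ω] (P : Measure Ω)
    [IsProbabilityMeasure P] (X : Ω → ℝ) (hsub : SubUniform P X)
    (α : ℝ) (hα : α ∈ Set.Icc (0:ℝ) (1/2)) :
    P {ω | X ω ≤ α} ≤ ENNReal.ofReal (2 * α) := by
  obtain ⟨hα0, hα2⟩ := hα
  rw [← ofReal_measureReal]
  refine ENNReal.ofReal_le_ofReal ?_
  rcases hα0.eq_or_lt with rfl | hαpos
  · refine le_of_forall_pos_le_add fun ε hε => ?_
    set c := min ε 1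
    have hc : 0 < c := lt_min hε one_pos
    have hbound := hsub.mul_measureReal_le hc.le hc.le (min_le_right _ _)
    rw [sub_zero, pow_two, mul_div_assoc] at hbound
    have := le_of_mul_le_mul_left hbound hc
    linarith [min_le_left ε 1]
  · have := hsub.mul_measureReal_le (c := 2 * α) (by linarith) (by linarith) (by linarith)
    nlinarith

/-- If `X` is a sub-uniform random variable, then for every `α ∈ [0, 1/2]` one has
`P(X ≤ α) ≤ 2α`. -/
theorem subUniform_cdf_le {Ω : Type*} [MeasurableSpace Ω] (P : Measure Ω)
    [IsProbabilityMeasure P] (X : Ω → ℝ) (hX : Measurable X) (hsub : SubUniform P X)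
    (α : ℝ) (hα : α ∈ Set.Icc (0:ℝ) (1/2)) :
    P {ω | X ω ≤ α} ≤ ENNReal.ofReal (2 * α) :=
  subUniform_cdf_le_general P X hsub α hα
end

section
/- Let μ be any probability measure on ℝ, let T be a random variable with law μ, and define the mid-p-value Q = g(T), where g(t) = (1/2)·μ([t,∞)) + (1/2)·μ((t,∞)). Then Q is sub-uniform. -/
/-!
Let `V` be uniform on `[0,1]` and independent of `T`. The randomized p-value
`P(t, v) = (1 - v) μ (t, ∞) + v μ [t, ∞)` makes `P(T, V)` exactly uniform: for `u ∈ (0,1)` let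
`τ` be the least point with `μ [τ, ∞) ≤ u`; then the fibre `{v ∈ [0,1] | P(t, v) ≤ u}` is null
for `t < τ`, full for `t > τ`, and of length `(u - μ (τ, ∞)) / μ {τ}` if `τ` is an atom, so its
length has `μ`-average `u`. The mid-p-value is `g t = P(t, 1/2)`, the mean of the affine map `P(t, ·)` over
`[0,1]`, so Jensen's inequality on every fibre and Fubini give
`E h(g(T)) ≤ E h(P(T, V)) = E h(U)`.
-/

open MeasureTheory Set

open Filter Function
open scoped ENNReal

instance isProbabilityMeasure_volume_restrict_Icc_zero_one :
    IsProbabilityMeasure (volume.restrict (Icc (0 : ℝ) 1)) :=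
  ⟨by simp⟩

lemma Continuous.integrable_comp_of_ae_mem {Ω : Type*} [MeasurableSpace Ω] {P : Measure Ω}
    [IsFiniteMeasure P] {h : ℝ → ℝ} (hh : Continuous h) {K : Set ℝ} (hK : IsCompact K)
    {X : Ω → ℝ} (hX : AEMeasurable X P) (hXK : ∀ᵐ ω ∂P, X ω ∈ K) :
    Integrable (fun ω => h (X ω)) P := by
  obtain ⟨C, hC⟩ := hK.exists_bound_of_continuousOn hh.continuousOn
  exact .of_bound (hh.measurable.comp_aemeasurable hX).aestronglyMeasurable C
    (hXK.mono fun ω hω => hC _ hω)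

lemma volume_restrict_Icc_zero_one_Iic (r : ℝ) :
    volume.restrict (Icc (0 : ℝ) 1) (Iic r) = ENNReal.ofReal (min r 1) := by
  have : Iic r ∩ Icc 0 1 = Icc 0 (min r 1) := by
    ext; simp only [mem_inter_iff, mem_Iic, mem_Icc, le_min_iff]; tauto
  rw [Measure.restrict_apply measurableSet_Iic, this, Real.volume_Icc, sub_zero]

lemma volume_restrict_Icc_zero_one_of_subset {s : Set ℝ} (h : Icc 0 1 ⊆ s) :
    volume.restrict (Icc (0 : ℝ) 1) s = 1 := by
  rw [Measure.restrict_apply_superset h, Real.volume_Icc, sub_zero, ENNReal.ofReal_one]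

lemma volume_restrict_Icc_zero_one_lerp_le {a b : ℝ} (hab : a < b) (u : ℝ) :
    volume.restrict (Icc (0 : ℝ) 1) {v | (1 - v) * a + v * b ≤ u}
      = ENNReal.ofReal (min ((u - a) / (b - a)) 1) := by
  have : {v : ℝ | (1 - v) * a + v * b ≤ u} = Iic ((u - a) / (b - a)) := by
    ext v
    rw [mem_ofPred_eq, mem_Iic, le_div_iff₀ (sub_pos.2 hab)]
    constructor <;> intro <;> linarith
  rw [this, volume_restrict_Icc_zero_one_Iic]

section Tails

variable {μ : Measure ℝ} [IsFiniteMeasure μ]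

lemma measureReal_Ici_eq_add (t : ℝ) : μ.real (Ici t) = μ.real {t} + μ.real (Ioi t) := by
  rw [← Ioi_insert, insert_eq,
    measureReal_union (disjoint_singleton_left.2 self_notMem_Ioi) measurableSet_Ioi]

lemma exists_measure_Ioi_le_le_measure_Ici {c : ℝ≥0∞} (hc₀ : 0 < c) (hc : c < μ univ) :
    ∃ τ, μ (Ioi τ) ≤ c ∧ c ≤ μ (Ici τ) ∧ ∀ t < τ, c < μ (Ioi t) := by
  set A := {t : ℝ | μ (Ici t) ≤ c}
  have hA : A.Nonempty := by
    have h := tendsto_measure_iInter_atTop (μ := μ) (fun t => measurableSet_Ici.nullMeasurableSet)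
      (fun s t hst => Ici_subset_Ici.2 hst) ⟨0, measure_ne_top _ _⟩
    rw [iInter_eq_empty_iff.2 fun x => ⟨x + 1, by simp⟩, measure_empty] at h
    exact ((h.eventually (gt_mem_nhds hc₀)).exists).imp fun t ht => ht.le
  have hA_bdd : BddBelow A := by
    obtain ⟨t₀, ht₀⟩ :=
      eventually_atBot.1 ((tendsto_measure_Ici_atBot μ).eventually (lt_mem_nhds hc))
    exact ⟨t₀, fun t ht => le_of_not_gt fun hlt => (ht₀ t hlt.le).not_ge ht⟩
  set τ := sInf A
  have h_above (t : ℝ) (ht : τ < t) : μ (Ici t) ≤ c := by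
    obtain ⟨s, hs, hst⟩ := exists_lt_of_csInf_lt hA ht
    exact (measure_mono (Ici_subset_Ici.2 hst.le)).trans hs
  have h_below (t : ℝ) (ht : t < τ) : c < μ (Ioi t) := by
    obtain ⟨s, hts, hsτ⟩ := exists_between ht
    have hs : c < μ (Ici s) := not_le.1 (show s ∉ A from notMem_of_lt_csInf hsτ hA_bdd)
    exact hs.trans_le (measure_mono (Ici_subset_Ioi.2 hts))
  refine ⟨τ, ?_, ?_, h_below⟩
  · have hIoi : Ioi τ = ⋃ t : Ioi τ, Ici (t : ℝ) := by
      ext x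
      simp only [mem_Ioi, mem_iUnion, mem_Ici, Subtype.exists]
      exact ⟨fun hx => ⟨x, hx, le_rfl⟩, fun ⟨t, ht, htx⟩ => ht.trans_le htx⟩
    rw [hIoi, Antitone.measure_iUnion (s := fun t : Ioi τ => Ici (t : ℝ))
      fun s t hst => Ici_subset_Ici.2 hst]
    exact iSup_le fun t => h_above t t.2
  · have hIci : Ici τ = ⋂ t : Iio τ, Ioi (t : ℝ) := by
      ext x
      simp only [mem_Ici, mem_iInter, mem_Ioi, Subtype.forall, mem_Iio]
      exact forall_lt_iff_le.symm
    rw [hIci, Antitone.measure_iInter (s := fun t : Iio τ => Ioi (t : ℝ))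
      (fun s t hst => Ioi_subset_Ioi hst) (fun _ => measurableSet_Ioi.nullMeasurableSet)
      ⟨⟨τ - 1, by simp⟩, measure_ne_top _ _⟩]
    exact le_iInf fun t => (h_below t t.2).le

end Tails

noncomputable def randomizedPValue (μ : Measure ℝ) (t v : ℝ) : ℝ :=
  (1 - v) * μ.real (Ioi t) + v * μ.real (Ici t)

section RandomizedPValue

variable {μ : Measure ℝ}

lemma measurable_randomizedPValue [IsFiniteMeasure μ] :
    Measurable (uncurry (randomizedPValue μ)) := by
  have hIoi : Antitone fun t => μ.real (Ioi t) := fun _ _ h => measureReal_mono (Ioi_subset_Ioi h)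
  have hIci : Antitone fun t => μ.real (Ici t) :=
    fun _ _ h => measureReal_mono (Ici_subset_Ici.2 h)
  exact ((measurable_const.sub measurable_snd).mul (hIoi.measurable.comp measurable_fst)).add
    (measurable_snd.mul (hIci.measurable.comp measurable_fst))

lemma measurable_randomizedPValue_left [IsFiniteMeasure μ] (v : ℝ) :
    Measurable fun t => randomizedPValue μ t v :=
  measurable_randomizedPValue.comp (measurable_id.prodMk measurable_const)

lemma measureReal_Ioi_le_randomizedPValue [IsFiniteMeasure μ] (t : ℝ) {v : ℝ}
    (hv : v ∈ Icc 0 1) : μ.real (Ioi t) ≤ randomizedPValue μ t v := by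
  have := measureReal_mono (μ := μ) (Ioi_subset_Ici_self (a := t))
  unfold randomizedPValue
  nlinarith [hv.1]

lemma randomizedPValue_le_measureReal_Ici [IsFiniteMeasure μ] (t : ℝ) {v : ℝ}
    (hv : v ∈ Icc 0 1) : randomizedPValue μ t v ≤ μ.real (Ici t) := by
  have := measureReal_mono (μ := μ) (Ioi_subset_Ici_self (a := t))
  unfold randomizedPValue
  nlinarith [hv.2]

lemma randomizedPValue_mem_Icc [IsProbabilityMeasure μ] (t : ℝ) {v : ℝ} (hv : v ∈ Icc 0 1) :
    randomizedPValue μ t v ∈ Icc 0 1 :=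
  ⟨measureReal_nonneg.trans (measureReal_Ioi_le_randomizedPValue t hv),
    (randomizedPValue_le_measureReal_Ici t hv).trans measureReal_le_one⟩

lemma integral_randomizedPValue (t : ℝ) :
    ∫ v in Icc 0 1, randomizedPValue μ t v = randomizedPValue μ t (1 / 2) := by
  have hv : ∫ v in Icc (0 : ℝ) 1, v = 1 / 2 := by
    rw [integral_Icc_eq_integral_Ioc, ← intervalIntegral.integral_of_le zero_le_one, integral_id]
    norm_num
  have h_affine : randomizedPValue μ t =
      fun v => μ.real (Ioi t) + v * (μ.real (Ici t) - μ.real (Ioi t)) := by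
    ext v; simp only [randomizedPValue]; ring
  have hint : IntegrableOn (fun v : ℝ => v) (Icc 0 1) := continuous_id.integrableOn_Icc
  rw [h_affine, integral_add (integrable_const _) (hint.mul_const _), integral_mul_const, hv]
  simp

lemma lintegral_volume_restrict_setOf_randomizedPValue_le [IsProbabilityMeasure μ] {u : ℝ}
    (hu : u ∈ Ioo 0 1) :
    ∫⁻ t, volume.restrict (Icc 0 1) {v | randomizedPValue μ t v ≤ u} ∂μ = ENNReal.ofReal u := by
  obtain ⟨τ, hτ_Ioi, hτ_Ici, h_below⟩ := exists_measure_Ioi_le_le_measure_Ici (μ := μ)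
    (c := ENNReal.ofReal u) (by simpa using hu.1) (by simpa using hu.2)
  have hS_le : μ.real (Ioi τ) ≤ u := ENNReal.toReal_le_of_le_ofReal hu.1.le hτ_Ioi
  set F := fun t => volume.restrict (Icc (0 : ℝ) 1) {v | randomizedPValue μ t v ≤ u}
  have hF_below (t : ℝ) (ht : t < τ) : F t = 0 := by
    have hu_lt : u < μ.real (Ioi t) :=
      (ENNReal.ofReal_lt_iff_lt_toReal hu.1.le (measure_ne_top _ _)).1 (h_below t ht)
    have h_empty : {v | randomizedPValue μ t v ≤ u} ∩ Icc 0 1 = ∅ :=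
      eq_empty_of_forall_notMem fun v ⟨hle, hv⟩ =>
        (hu_lt.trans_le (measureReal_Ioi_le_randomizedPValue t hv)).not_ge hle
    simp only [F]
    rw [Measure.restrict_apply' measurableSet_Icc, h_empty, measure_empty]
  have hF_above (t : ℝ) (ht : τ < t) : F t = 1 := by
    have hA_le : μ.real (Ici t) ≤ u := ENNReal.toReal_le_of_le_ofReal hu.1.le
      ((measure_mono (Ici_subset_Ioi.2 ht)).trans hτ_Ioi)
    exact volume_restrict_Icc_zero_one_of_subset fun v hv =>
      (randomizedPValue_le_measureReal_Ici t hv).trans hA_le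
  have hF_atom : F τ * μ {τ} = ENNReal.ofReal (u - μ.real (Ioi τ)) := by
    have hu_le : u ≤ μ.real (Ici τ) :=
      (ENNReal.ofReal_le_iff_le_toReal (measure_ne_top _ _)).1 hτ_Ici
    have h_atom : μ {τ} = ENNReal.ofReal (μ.real (Ici τ) - μ.real (Ioi τ)) := by
      rw [measureReal_Ici_eq_add, add_sub_cancel_right, ofReal_measureReal]
    rcases (measureReal_mono (μ := μ) (Ioi_subset_Ici_self (a := τ))).eq_or_lt with h | h
    · rw [h_atom, ← h, sub_self, le_antisymm hS_le (h ▸ hu_le), sub_self, ENNReal.ofReal_zero,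
        mul_zero]
    · have h_pos : 0 < μ.real (Ici τ) - μ.real (Ioi τ) := sub_pos.2 h
      simp only [F, randomizedPValue]
      rw [h_atom, volume_restrict_Icc_zero_one_lerp_le h,
        min_eq_left ((div_le_one h_pos).2 (by linarith)),
        ← ENNReal.ofReal_mul (div_nonneg (by linarith) h_pos.le), div_mul_cancel₀ _ h_pos.ne']
  calc ∫⁻ t, F t ∂μ = ∫⁻ t in Iio τ, F t ∂μ + ∫⁻ t in insert τ (Ioi τ), F t ∂μ := by
        rw [Ioi_insert, ← compl_Iio, lintegral_add_compl _ measurableSet_Iio]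
    _ = F τ * μ {τ} + μ (Ioi τ) := by
        rw [lintegral_insert self_notMem_Ioi, setLIntegral_congr_fun measurableSet_Iio hF_below,
          setLIntegral_congr_fun measurableSet_Ioi hF_above]
        simp
    _ = ENNReal.ofReal u := by
        rw [hF_atom, ← ofReal_measureReal, ← ENNReal.ofReal_add (sub_nonneg.2 hS_le)
          measureReal_nonneg, sub_add_cancel]

theorem map_prod_randomizedPValue [IsProbabilityMeasure μ] :
    (μ.prod (volume.restrict (Icc 0 1))).map (uncurry (randomizedPValue μ))
      = volume.restrict (Icc 0 1) := by
  set ν := (μ.prod (volume.restrict (Icc 0 1))).map (uncurry (randomizedPValue μ))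
  have hν (u : ℝ) :
      ν (Iic u) = ∫⁻ t, volume.restrict (Icc 0 1) {v | randomizedPValue μ t v ≤ u} ∂μ := by
    rw [Measure.map_apply measurable_randomizedPValue measurableSet_Iic,
      Measure.prod_apply (measurable_randomizedPValue measurableSet_Iic)]
    rfl
  have hν_Ioo {u : ℝ} (hu : u ∈ Ioo 0 1) : ν (Iic u) = ENNReal.ofReal u := by
    rw [hν, lintegral_volume_restrict_setOf_randomizedPValue_le hu]
  refine Measure.ext_of_Iic _ _ fun u => ?_
  rw [volume_restrict_Icc_zero_one_Iic]
  rcases le_or_gt u 0 with hu₀ | hu₀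
  · rw [ENNReal.ofReal_of_nonpos (min_le_of_left_le hu₀)]
    refine le_antisymm (ENNReal.le_of_forall_pos_le_add fun ε hε _ => ?_) bot_le
    have hr : min (ε : ℝ) (1 / 2) ∈ Ioo 0 1 := ⟨by positivity, by norm_num [min_lt_iff]⟩
    calc ν (Iic u) ≤ ν (Iic (min (ε : ℝ) (1 / 2))) :=
          measure_mono (Iic_subset_Iic.2 (hu₀.trans hr.1.le))
      _ ≤ 0 + ε := by
        rw [hν_Ioo hr, zero_add, ← ENNReal.ofReal_coe_nnreal]
        exact ENNReal.ofReal_le_ofReal (min_le_left _ _)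
  rcases lt_or_ge u 1 with hu₁ | hu₁
  · rw [min_eq_left hu₁.le, hν_Ioo ⟨hu₀, hu₁⟩]
  · have h_full (t : ℝ) : volume.restrict (Icc 0 1) {v | randomizedPValue μ t v ≤ u} = 1 :=
      volume_restrict_Icc_zero_one_of_subset fun v hv =>
        ((randomizedPValue_mem_Icc t hv).2.trans hu₁)
    simp [hν, h_full, min_eq_right hu₁]

end RandomizedPValue

lemma integral_comp_randomizedPValue_half_le {μ : Measure ℝ} [IsProbabilityMeasure μ]
    {h : ℝ → ℝ} (hh : ConvexOn ℝ univ h) :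
    ∫ t, h (randomizedPValue μ t (1 / 2)) ∂μ ≤ ∫ x in Icc (0 : ℝ) 1, h x := by
  have hc : Continuous h := continuousOn_univ.1 (hh.continuousOn isOpen_univ)
  have h_int : Integrable (fun z : ℝ × ℝ => h (randomizedPValue μ z.1 z.2))
      (μ.prod (volume.restrict (Icc 0 1))) :=
    hc.integrable_comp_of_ae_mem isCompact_Icc measurable_randomizedPValue.aemeasurable
      (Measure.quasiMeasurePreserving_snd.ae (ae_restrict_mem measurableSet_Icc) |>.mono
        fun z hz => randomizedPValue_mem_Icc z.1 hz)
  have h_jensen (t : ℝ) :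
      h (randomizedPValue μ t (1 / 2)) ≤ ∫ v in Icc 0 1, h (randomizedPValue μ t v) := by
    have hP : Continuous (randomizedPValue μ t) := by unfold randomizedPValue; fun_prop
    rw [← integral_randomizedPValue]
    exact hh.map_integral_le hc.continuousOn isClosed_univ (by simp)
      hP.integrableOn_Icc (hc.comp hP).integrableOn_Icc
  calc ∫ t, h (randomizedPValue μ t (1 / 2)) ∂μ
      ≤ ∫ t, (∫ v in Icc 0 1, h (randomizedPValue μ t v)) ∂μ := by
        refine integral_mono ?_ h_int.integral_prod_left h_jensen
        exact hc.integrable_comp_of_ae_mem isCompact_Icc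
          (measurable_randomizedPValue_left _).aemeasurable
          (ae_of_all _ fun t => randomizedPValue_mem_Icc t ⟨by norm_num, by norm_num⟩)
    _ = ∫ z, h (randomizedPValue μ z.1 z.2) ∂(μ.prod (volume.restrict (Icc 0 1))) :=
        (integral_prod _ h_int).symm
    _ = ∫ x, h x ∂(μ.prod (volume.restrict (Icc 0 1))).map (uncurry (randomizedPValue μ)) :=
        (integral_map measurable_randomizedPValue.aemeasurable hc.aestronglyMeasurable).symm
    _ = ∫ x in Icc (0 : ℝ) 1, h x := by rw [map_prod_randomizedPValue]

/-- Let `μ` be a probability measure on `ℝ`, let `T` be a random variable with law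
`μ`, and let `Q = g(T)` be the mid-p-value, where
`g t = (1/2) μ [t, ∞) + (1/2) μ (t, ∞)`.  Then `Q` is sub-uniform. -/
theorem midP_subUniform {Ω : Type*} [MeasurableSpace Ω] (P : Measure Ω)
    [IsProbabilityMeasure P] (μ : Measure ℝ) [IsProbabilityMeasure μ]
    (T : Ω → ℝ) (hT : Measurable T) (hlaw : P.map T = μ)
    (g : ℝ → ℝ)
    (hg : ∀ t, g t = (1/2) * (μ (Set.Ici t)).toReal + (1/2) * (μ (Set.Ioi t)).toReal) :
    SubUniform P (fun ω => g (T ω)) := by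
  obtain rfl : g = fun t => randomizedPValue μ t (1 / 2) := by
    ext t; rw [hg, randomizedPValue, measureReal_def, measureReal_def]; ring
  intro h hh _
  have hc : Continuous h := continuousOn_univ.1 (hh.continuousOn isOpen_univ)
  have hg_meas := measurable_randomizedPValue_left (μ := μ) (1 / 2)
  refine ⟨hc.integrable_comp_of_ae_mem isCompact_Icc (hg_meas.comp hT).aemeasurable
    (ae_of_all _ fun ω => randomizedPValue_mem_Icc _ ⟨by norm_num, by norm_num⟩), ?_⟩
  rw [← integral_map (f := fun t => h (randomizedPValue μ t (1 / 2))) hT.aemeasurable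
    (hc.measurable.comp hg_meas).aestronglyMeasurable, hlaw]
  exact integral_comp_randomizedPValue_half_le hh
end

section
/- Let X₁, …, Xₙ be independent sub-uniform random variables and let X̄ₙ = n⁻¹ Σᵢ Xᵢ. Then for every t with 0 ≤ t ≤ 1/2 and every h > 0, P(1/2 − X̄ₙ ≥ t) ≤ {2 e^{−h t} sinh(h/2) / h}ⁿ. -/
/-!
Centre the variables: `Yᵢ = 1/2 - Xᵢ`. Since `x ↦ exp (s (1/2 - x))` is convex and positive,
sub-uniformity bounds the moment generating function of each `Yᵢ` at `s` by that of `1/2 - U`,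
namely `∫₀¹ exp (s (1/2 - x)) dx = 2 sinh (s/2) / s`. By independence the moment generating
function of `∑ Yᵢ` is at most the `n`-th power of this, and Chernoff's bound for the event
`n t ≤ ∑ Yᵢ` gives the claim.
-/

open MeasureTheory Set

open ProbabilityTheory

lemma convexOn_exp_const_sub_mul (a s : ℝ) :
    ConvexOn ℝ univ fun x : ℝ => Real.exp (a - s * x) := by
  simpa [Function.comp_def] using
    convexOn_exp.comp_affineMap (AffineMap.const ℝ ℝ a - s • AffineMap.id ℝ ℝ)

lemma integral_Icc_exp_half_sub_mul {s : ℝ} (hs : s ≠ 0) :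
    ∫ x in Icc (0 : ℝ) 1, Real.exp (s / 2 - s * x) = 2 * Real.sinh (s / 2) / s := by
  rw [integral_Icc_eq_integral_Ioc, ← intervalIntegral.integral_of_le zero_le_one,
    intervalIntegral.integral_comp_sub_mul _ hs, integral_exp, Real.sinh_eq, smul_eq_mul,
    show s / 2 - s * 1 = -(s / 2) by ring, mul_zero, sub_zero]
  field_simp

namespace SubUniform

variable {Ω : Type*} [MeasurableSpace Ω] {P : Measure Ω} {X : Ω → ℝ}

lemma integrable_and_integral_le_of_nonneg (hX : SubUniform P X) {h : ℝ → ℝ}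
    (hconv : ConvexOn ℝ univ h) (hnonneg : ∀ x, 0 ≤ h x) :
    Integrable (fun ω => h (X ω)) P ∧ ∫ ω, h (X ω) ∂P ≤ ∫ x in Icc (0 : ℝ) 1, h x := by
  refine hX h hconv ?_
  simp only [max_eq_right (neg_nonpos.mpr (hnonneg _))]
  exact integrable_zero _ _ _

lemma integrable_exp_mul_half_sub (hX : SubUniform P X) (s : ℝ) :
    Integrable (fun ω => Real.exp (s * (1 / 2 - X ω))) P := by
  simpa only [mul_sub, mul_one_div] using (hX.integrable_and_integral_le_of_nonneg
    (convexOn_exp_const_sub_mul (s / 2) s) fun _ => (Real.exp_pos _).le).1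

lemma mgf_half_sub_le (hX : SubUniform P X) {s : ℝ} (hs : s ≠ 0) :
    mgf (fun ω => 1 / 2 - X ω) P s ≤ 2 * Real.sinh (s / 2) / s := by
  rw [mgf, ← integral_Icc_exp_half_sub_mul hs]
  simpa only [mul_sub, mul_one_div] using (hX.integrable_and_integral_le_of_nonneg
    (convexOn_exp_const_sub_mul (s / 2) s) fun _ => (Real.exp_pos _).le).2

end SubUniform

lemma ProbabilityTheory.iIndepFun.measureReal_sum_ge_le_of_mgf_le {Ω ι : Type*} [MeasurableSpace Ω]
    [Fintype ι] {P : Measure Ω} [IsFiniteMeasure P] {Y : ι → Ω → ℝ} (hind : iIndepFun Y P)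
    (hmeas : ∀ i, Measurable (Y i)) {s c : ℝ} (hs : 0 ≤ s)
    (hint : ∀ i, Integrable (fun ω => Real.exp (s * Y i ω)) P)
    (hmgf : ∀ i, mgf (Y i) P s ≤ c) (ε : ℝ) :
    P.real {ω | ε ≤ ∑ i, Y i ω} ≤ Real.exp (-s * ε) * c ^ Fintype.card ι := by
  have hchernoff := measure_ge_le_exp_mul_mgf ε hs
    (hind.integrable_exp_mul_sum hmeas (s := .univ) fun i _ => hint i)
  simp only [Finset.sum_apply, hind.mgf_sum hmeas] at hchernoff
  refine hchernoff.trans (mul_le_mul_of_nonneg_left ?_ (Real.exp_pos _).le)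
  calc ∏ i, mgf (Y i) P s ≤ ∏ _i : ι, c :=
        Finset.prod_le_prod (fun _ _ => mgf_nonneg) fun i _ => hmgf i
    _ = c ^ Fintype.card ι := by rw [Finset.prod_const, Finset.card_univ]

open ProbabilityTheory in
theorem subUniform_avg_chernoff_general {Ω : Type*} [MeasurableSpace Ω] (P : Measure Ω)
    [IsProbabilityMeasure P] (n : ℕ) (X : Fin n → Ω → ℝ)
    (hmeas : ∀ i, Measurable (X i))
    (hind : iIndepFun X P)
    (hsub : ∀ i, SubUniform P (X i))
    (t : ℝ) (s : ℝ) (hs : 0 < s) :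
    P {ω | 1/2 - (∑ i, X i ω) / n ≥ t} ≤
      ENNReal.ofReal ((2 * Real.exp (-s * t) * Real.sinh (s / 2) / s) ^ n) := by
  have hevent : {ω | 1/2 - (∑ i, X i ω) / n ≥ t} ⊆ {ω | n * t ≤ ∑ i, (1 / 2 - X i ω)} := by
    intro ω (hω : t ≤ 1 / 2 - (∑ i, X i ω) / n)
    have hsum : (n : ℝ) * ((∑ i, X i ω) / n) = ∑ i, X i ω :=
      mul_div_cancel_of_imp' fun hn => by
        obtain rfl := Nat.cast_eq_zero.mp hn; simp
    have := mul_le_mul_of_nonneg_left hω n.cast_nonneg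
    simp only [mem_ofPred_eq, Finset.sum_sub_distrib, Finset.sum_const, Finset.card_univ,
      Fintype.card_fin, nsmul_eq_mul]
    linarith
  have hchernoff := (hind.comp (fun _ x => 1 / 2 - x) fun _ => by fun_prop)
    |>.measureReal_sum_ge_le_of_mgf_le (fun i => by fun_prop) hs.le
    (fun i => (hsub i).integrable_exp_mul_half_sub s)
    (fun i => (hsub i).mgf_half_sub_le hs.ne') (n * t)
  calc P {ω | 1/2 - (∑ i, X i ω) / n ≥ t}
      ≤ ENNReal.ofReal (P.real {ω | n * t ≤ ∑ i, (1 / 2 - X i ω)}) := by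
        rw [ofReal_measureReal]; exact measure_mono hevent
    _ ≤ ENNReal.ofReal ((2 * Real.exp (-s * t) * Real.sinh (s / 2) / s) ^ n) := by
        refine ENNReal.ofReal_le_ofReal (hchernoff.trans_eq ?_)
        rw [Fintype.card_fin, show -s * (n * t) = n * (-s * t) by ring, Real.exp_nat_mul,
          ← mul_pow]
        ring

open ProbabilityTheory in
/-- Let `X₁, …, Xₙ` be independent sub-uniform random variables and let
`X̄ₙ = n⁻¹ ∑ᵢ Xᵢ`.  Then for every `0 ≤ t ≤ 1/2` and every `s > 0`,
`P(1/2 − X̄ₙ ≥ t) ≤ {2 e^{−s t} sinh(s/2) / s}ⁿ`. -/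
theorem subUniform_avg_chernoff {Ω : Type*} [MeasurableSpace Ω] (P : Measure Ω)
    [IsProbabilityMeasure P] (n : ℕ) (hn : 0 < n) (X : Fin n → Ω → ℝ)
    (hmeas : ∀ i, Measurable (X i))
    (hind : iIndepFun X P)
    (hsub : ∀ i, SubUniform P (X i))
    (t : ℝ) (ht0 : 0 ≤ t) (ht1 : t ≤ 1/2) (s : ℝ) (hs : 0 < s) :
    P {ω | 1/2 - (∑ i, X i ω) / n ≥ t} ≤
      ENNReal.ofReal ((2 * Real.exp (-s * t) * Real.sinh (s / 2) / s) ^ n) :=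
  subUniform_avg_chernoff_general P n X hmeas hind hsub t s hs
end

section
/- Let X₁, …, Xₙ be independent sub-uniform random variables and let X̄ₙ = n⁻¹ Σᵢ Xᵢ. Then for every t with 0 ≤ t ≤ 1/2, P(1/2 − X̄ₙ ≥ t) ≤ exp(−6 n t²). (This improves the exponent 2 of Hoeffding's inequality for [0,1]-valued variables to 6.) -/
/-!
Testing sub-uniformity against the convex functions `x ↦ exp (t * x)` bounds the moment
generating function of `X` by that of `U`, namely `(eᵗ - 1) / t = e^{t/2} · sinh (t/2) / (t/2)`.
Comparing the power series of `sinh x / x` and `exp (x² / 6)` term by term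
(`6ⁿ n! ≤ (2n+1)!`) bounds this by `exp (t/2 + t²/24)`, so `1/2 - X` is sub-Gaussian with
variance proxy `1/12`, the variance of `U`. Hoeffding's inequality for sums of independent
sub-Gaussian variables then gives `exp (-(n t)² / (2 n / 12)) = exp (-6 n t²)`.
-/

open MeasureTheory Set

open ProbabilityTheory Real
open scoped Nat NNReal

lemma Nat.six_pow_mul_factorial_le_factorial_two_mul_add_one (n : ℕ) :
    6 ^ n * n ! ≤ (2 * n + 1)! := by
  induction n with
  | zero => simp
  | succ k ih =>
    calc 6 ^ (k + 1) * (k + 1)! = 6 * (k + 1) * (6 ^ k * k !) := by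
          rw [pow_succ, Nat.factorial_succ]; ring
      _ ≤ (2 * k + 3) * (2 * k + 2) * (2 * k + 1)! :=
          Nat.mul_le_mul (by nlinarith) ih
      _ = (2 * (k + 1) + 1)! := by
          rw [show 2 * (k + 1) + 1 = 2 * k + 2 + 1 by ring, Nat.factorial_succ (2 * k + 2),
            Nat.factorial_succ (2 * k + 1)]; ring

lemma Real.sinh_le_mul_exp_sq_div_six {x : ℝ} (hx : 0 ≤ x) : sinh x ≤ x * exp (x ^ 2 / 6) := by
  rw [sinh_eq_tsum, exp_eq_exp_ℝ, NormedSpace.exp_eq_tsum ℝ, ← tsum_mul_left]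
  refine x.hasSum_sinh.summable.tsum_le_tsum (fun n ↦ ?_)
    ((NormedSpace.expSeries_summable' (x ^ 2 / 6)).mul_left x)
  rw [smul_eq_mul, div_pow, ← pow_mul, inv_mul_eq_div, div_div, mul_div_assoc', ← pow_succ']
  gcongr
  exact_mod_cast n.six_pow_mul_factorial_le_factorial_two_mul_add_one

lemma Real.sinh_div_self_le_exp_sq_div_six (x : ℝ) : sinh x / x ≤ exp (x ^ 2 / 6) := by
  rcases lt_trichotomy x 0 with hx | rfl | hx
  · rw [← neg_div_neg_eq, ← sinh_neg, ← neg_sq, div_le_iff₀' (neg_pos.2 hx)]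
    exact sinh_le_mul_exp_sq_div_six (neg_nonneg.2 hx.le)
  · simp
  · rw [div_le_iff₀' hx]
    exact sinh_le_mul_exp_sq_div_six hx.le

lemma setIntegral_Icc_zero_one_exp_mul_le (t : ℝ) :
    ∫ x in Icc (0 : ℝ) 1, exp (t * x) ≤ exp (t / 2 + t ^ 2 / 24) := by
  rcases eq_or_ne t 0 with rfl | ht
  · simp
  have hint : ∫ x in Icc (0 : ℝ) 1, exp (t * x) = exp (t / 2) * (sinh (t / 2) / (t / 2)) := by
    rw [integral_Icc_eq_integral_Ioc, ← intervalIntegral.integral_of_le zero_le_one,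
      intervalIntegral.integral_comp_mul_left exp ht, integral_exp, sinh_eq, smul_eq_mul,
      mul_zero, mul_one, exp_zero]
    field_simp
    rw [mul_sub, ← exp_add, ← exp_add, add_halves, add_neg_cancel, exp_zero]
  calc ∫ x in Icc (0 : ℝ) 1, exp (t * x) = exp (t / 2) * (sinh (t / 2) / (t / 2)) := hint
    _ ≤ exp (t / 2) * exp ((t / 2) ^ 2 / 6) := by
        gcongr; exact sinh_div_self_le_exp_sq_div_six _
    _ = exp (t / 2 + t ^ 2 / 24) := by rw [← exp_add]; ring_nf

lemma convexOn_exp_mul (t : ℝ) : ConvexOn ℝ univ fun x ↦ exp (t * x) :=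
  convexOn_exp.comp_linearMap (LinearMap.mulLeft ℝ t)

namespace SubUniform

variable {Ω : Type*} [MeasurableSpace Ω] {P : Measure Ω} {X : Ω → ℝ}

lemma integrable_exp_mul_and_mgf_le (hX : SubUniform P X) (t : ℝ) :
    Integrable (fun ω ↦ exp (t * X ω)) P ∧ mgf X P t ≤ ∫ x in Icc (0 : ℝ) 1, exp (t * x) := by
  refine hX _ (convexOn_exp_mul t) ?_
  simp_rw [max_eq_right (neg_nonpos.2 (exp_pos _).le)]
  exact integrable_zero _ _ _

lemma mgf_le_exp (hX : SubUniform P X) (t : ℝ) : mgf X P t ≤ exp (t / 2 + t ^ 2 / 24) :=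
  (hX.integrable_exp_mul_and_mgf_le t).2.trans (setIntegral_Icc_zero_one_exp_mul_le t)

lemma hasSubgaussianMGF_half_sub (hX : SubUniform P X) :
    HasSubgaussianMGF (fun ω ↦ 1 / 2 - X ω) (1 / 12) P where
  integrable_exp_mul t := by
    have h := (hX.integrable_exp_mul_and_mgf_le (-t)).1.const_mul (exp (t / 2))
    refine h.congr (ae_of_all _ fun ω ↦ ?_)
    simp only [← exp_add]
    ring_nf
  mgf_le t := by
    calc mgf (fun ω ↦ 1 / 2 - X ω) P t = exp (t * (1 / 2)) * mgf X P (-t) := by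
          rw [← mgf_neg, ← mgf_const_add]; rfl
      _ ≤ exp (t * (1 / 2)) * exp (-t / 2 + (-t) ^ 2 / 24) := by
          gcongr; exact hX.mgf_le_exp (-t)
      _ = exp (((1 / 12 : ℝ≥0) : ℝ) * t ^ 2 / 2) := by
          rw [← exp_add]; push_cast; ring_nf

end SubUniform

open ProbabilityTheory in
theorem subUniform_avg_hoeffding_improved_general {Ω : Type*} [MeasurableSpace Ω] (P : Measure Ω)
    [IsProbabilityMeasure P] (n : ℕ) (hn : 0 < n) (X : Fin n → Ω → ℝ)
    (hind : iIndepFun X P)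
    (hsub : ∀ i, SubUniform P (X i))
    (t : ℝ) (ht0 : 0 ≤ t) :
    P {ω | 1/2 - (∑ i, X i ω) / n ≥ t} ≤ ENNReal.ofReal (Real.exp (-6 * n * t ^ 2)) := by
  have hindY : iIndepFun (fun i ω ↦ 1 / 2 - X i ω) P :=
    hind.comp (fun _ x ↦ 1 / 2 - x) fun _ ↦ by fun_prop
  have hoeffding := HasSubgaussianMGF.measure_sum_ge_le_of_iIndepFun hindY
    (c := fun _ ↦ 1 / 12) (s := Finset.univ) (fun i _ ↦ (hsub i).hasSubgaussianMGF_half_sub)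
    (ε := n * t) (by positivity)
  have hset : {ω | 1/2 - (∑ i, X i ω) / n ≥ t} = {ω | n * t ≤ ∑ i, (1 / 2 - X i ω)} := by
    ext ω
    have hn' : (0 : ℝ) < n := by exact_mod_cast hn
    simp only [mem_ofPred_eq, Finset.sum_sub_distrib, Finset.sum_const, Finset.card_univ,
      Fintype.card_fin, nsmul_eq_mul]
    rw [ge_iff_le, le_sub_comm, div_le_iff₀ hn']
    constructor <;> intro h <;> linarith
  have hexponent : -(n * t) ^ 2 / (2 * ((∑ _i : Fin n, 1 / 12 : ℝ≥0) : ℝ)) = -6 * n * t ^ 2 := by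
    simp only [Finset.sum_const, Finset.card_univ, Fintype.card_fin, nsmul_eq_mul]
    push_cast
    field_simp
    ring
  rw [hexponent] at hoeffding
  rw [hset, ← ofReal_measureReal]
  exact ENNReal.ofReal_le_ofReal hoeffding

open ProbabilityTheory in
/-- Let `X₁, …, Xₙ` be independent sub-uniform random variables and let
`X̄ₙ = n⁻¹ ∑ᵢ Xᵢ`.  Then for every `0 ≤ t ≤ 1/2`,
`P(1/2 − X̄ₙ ≥ t) ≤ exp(−6 n t²)`. -/
theorem subUniform_avg_hoeffding_improved {Ω : Type*} [MeasurableSpace Ω] (P : Measure Ω)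
    [IsProbabilityMeasure P] (n : ℕ) (hn : 0 < n) (X : Fin n → Ω → ℝ)
    (hmeas : ∀ i, Measurable (X i))
    (hind : iIndepFun X P)
    (hsub : ∀ i, SubUniform P (X i))
    (t : ℝ) (ht0 : 0 ≤ t) (ht1 : t ≤ 1/2) :
    P {ω | 1/2 - (∑ i, X i ω) / n ≥ t} ≤ ENNReal.ofReal (Real.exp (-6 * n * t ^ 2)) :=
  subUniform_avg_hoeffding_improved_general P n hn X hind hsub t ht0
end

section
/- Let X₁, …, Xₙ be independent sub-uniform random variables with standard deviations σ₁, …, σₙ, all strictly positive, and let Ȳₙ = n⁻¹ Σᵢ (1/2 − Xᵢ)/σᵢ. Then for every t ≥ 0 and every h > 0, P(Ȳₙ ≥ t) ≤ ∏ᵢ exp[−h{t + 1/(2σᵢ)}] · { (e^{h/σᵢ} − 1)/(h/σᵢ) + h²(1/2 − 1/(24 σᵢ²)) }. -/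
/-!
Chernoff's bound reduces the claim to the moment generating function of each `(1/2 - Xᵢ)/σᵢ`,
that is, to `E e^{-aX}` for a sub-uniform `X` and `a = s/σ > 0`. Testing sub-uniformity against
`x`, `-x` and `x²` gives `E X = 1/2` and `E X² = σ² + 1/4`. On `(-∞, 1]` the second derivative
of `e^{-ax}` is at least `a² e^{-a}`, so `e^{-ax} - (a² e^{-a}/2) sqRamp x` is convex, where
`sqRamp` is `x²` on `[0, 1]`, vanishes to the left and is affine to the right; the convex order
bounds its expectation by its integral over `[0, 1]`, and `sqRamp ≤ x²` bounds the rest by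
`(a² e^{-a}/2) E X²`.
-/

open MeasureTheory Set

open Real ProbabilityTheory

noncomputable section

def unitClamp (x : ℝ) : ℝ := max 0 (min x 1)

lemma continuous_unitClamp : Continuous unitClamp := by
  unfold unitClamp; fun_prop

lemma monotone_unitClamp : Monotone unitClamp :=
  fun _ _ h => max_le_max le_rfl (min_le_min_right 1 h)

lemma unitClamp_nonneg (x : ℝ) : 0 ≤ unitClamp x := le_max_left _ _

lemma unitClamp_le_one (x : ℝ) : unitClamp x ≤ 1 := max_le zero_le_one (min_le_right _ _)

lemma unitClamp_of_nonpos {x : ℝ} (hx : x ≤ 0) : unitClamp x = 0 :=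
  max_eq_left (min_le_of_left_le hx)

lemma unitClamp_of_mem {x : ℝ} (hx : x ∈ Icc (0 : ℝ) 1) : unitClamp x = x := by
  simp [unitClamp, hx.1, hx.2]

lemma unitClamp_of_one_le {x : ℝ} (hx : 1 ≤ x) : unitClamp x = 1 := by
  simp [unitClamp, hx]

lemma le_unitClamp {x : ℝ} (hx : x ≤ 1) : x ≤ unitClamp x := by
  simp [unitClamp, hx]

lemma unitClamp_le {x : ℝ} (hx : 0 ≤ x) : unitClamp x ≤ x := by
  simp [unitClamp, hx]

def sqRamp (x : ℝ) : ℝ := ∫ t in (0 : ℝ)..x, 2 * unitClamp t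

lemma hasDerivAt_sqRamp (x : ℝ) : HasDerivAt sqRamp (2 * unitClamp x) x :=
  ((continuous_const.mul continuous_unitClamp).integral_hasStrictDerivAt 0 x).hasDerivAt

lemma continuous_sqRamp : Continuous sqRamp :=
  continuous_iff_continuousAt.2 fun x => (hasDerivAt_sqRamp x).continuousAt

lemma sqRamp_of_nonpos {x : ℝ} (hx : x ≤ 0) : sqRamp x = 0 := by
  rw [sqRamp, intervalIntegral.integral_symm, intervalIntegral.integral_congr (g := fun _ => 0)]
  · simp
  · intro t ht
    rw [uIcc_of_le hx] at ht
    simp [unitClamp_of_nonpos ht.2]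

lemma sqRamp_of_mem {x : ℝ} (hx : x ∈ Icc (0 : ℝ) 1) : sqRamp x = x ^ 2 := by
  rw [sqRamp, intervalIntegral.integral_congr (g := fun t => 2 * t),
    intervalIntegral.integral_const_mul, integral_id]
  · ring
  · intro t ht
    rw [uIcc_of_le hx.1] at ht
    simp [unitClamp_of_mem ⟨ht.1, ht.2.trans hx.2⟩]

lemma sqRamp_of_one_le {x : ℝ} (hx : 1 ≤ x) : sqRamp x = 2 * x - 1 := by
  have hint : ∀ a b : ℝ, IntervalIntegrable (fun t => 2 * unitClamp t) volume a b :=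
    fun a b => (continuous_const.mul continuous_unitClamp).intervalIntegrable a b
  have htail : ∫ t in (1 : ℝ)..x, 2 * unitClamp t = 2 * (x - 1) := by
    rw [intervalIntegral.integral_congr (g := fun _ => 2)]
    · simp [mul_comm]
    · intro t ht
      rw [uIcc_of_le hx] at ht
      simp [unitClamp_of_one_le ht.1]
  rw [sqRamp, ← intervalIntegral.integral_add_adjacent_intervals (hint 0 1) (hint 1 x), htail,
    ← sqRamp, sqRamp_of_mem ⟨zero_le_one, le_rfl⟩]
  ring

lemma sqRamp_nonneg (x : ℝ) : 0 ≤ sqRamp x := by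
  rcases le_total x 0 with hx | hx
  · rw [sqRamp_of_nonpos hx]
  rcases le_total x 1 with hx' | hx'
  · rw [sqRamp_of_mem ⟨hx, hx'⟩]; positivity
  · rw [sqRamp_of_one_le hx']; linarith

lemma sqRamp_le_sq (x : ℝ) : sqRamp x ≤ x ^ 2 := by
  rcases le_total x 0 with hx | hx
  · rw [sqRamp_of_nonpos hx]; positivity
  rcases le_total x 1 with hx' | hx'
  · rw [sqRamp_of_mem ⟨hx, hx'⟩]
  · rw [sqRamp_of_one_le hx']; nlinarith [sq_nonneg (x - 1)]

lemma integral_sqRamp_zero_one : ∫ x in (0 : ℝ)..1, sqRamp x = 1 / 3 := by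
  rw [intervalIntegral.integral_congr (g := fun x => x ^ 2), integral_pow]
  · norm_num
  · intro x hx
    rw [uIcc_of_le zero_le_one] at hx
    exact sqRamp_of_mem hx

lemma mul_exp_neg_mul_sub_le {a u v : ℝ} (ha : 0 ≤ a) (huv : u ≤ v) (hv : v ≤ 1) :
    a * exp (-a) * (v - u) ≤ exp (-(a * u)) - exp (-(a * v)) := by
  have hsplit : exp (-(a * u)) = exp (-(a * v)) * exp (a * (v - u)) := by
    rw [← exp_add]; ring_nf
  have hlin := mul_le_mul_of_nonneg_left (add_one_le_exp (a * (v - u))) (exp_pos (-(a * v))).le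
  have hmin := mul_le_mul_of_nonneg_right (exp_le_exp.2 (by nlinarith : -a ≤ -(a * v)))
    (mul_nonneg ha (sub_nonneg.2 huv))
  rw [hsplit]
  nlinarith

lemma antitone_exp_neg_mul_add_unitClamp {a : ℝ} (ha : 0 ≤ a) :
    Antitone fun x => exp (-(a * x)) + a * exp (-a) * unitClamp x := by
  intro x y hxy
  dsimp only
  rcases (monotone_unitClamp hxy).eq_or_lt with hclamp | hclamp
  · rw [hclamp]
    gcongr
  · have hx : x < 1 := lt_of_not_ge fun h => by
      linarith [unitClamp_of_one_le h, unitClamp_le_one y]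
    have hy : 0 < y := lt_of_not_ge fun h => by
      linarith [unitClamp_of_nonpos h, unitClamp_nonneg x]
    have hx' : exp (-(a * unitClamp x)) ≤ exp (-(a * x)) := by
      gcongr; exact le_unitClamp hx.le
    have hy' : exp (-(a * y)) ≤ exp (-(a * unitClamp y)) := by
      gcongr; exact unitClamp_le hy.le
    linarith [mul_exp_neg_mul_sub_le ha hclamp.le (unitClamp_le_one y)]

lemma convexOn_exp_neg_mul_sub_sqRamp {a : ℝ} (ha : 0 ≤ a) :
    ConvexOn ℝ univ fun x => exp (-(a * x)) - a ^ 2 * exp (-a) / 2 * sqRamp x := by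
  have hderiv : ∀ x, HasDerivAt (fun x => exp (-(a * x)) - a ^ 2 * exp (-a) / 2 * sqRamp x)
      (-a * (exp (-(a * x)) + a * exp (-a) * unitClamp x)) x := by
    intro x
    have hlin : HasDerivAt (fun x => -(a * x)) (-a) x := by
      simpa using ((hasDerivAt_id' x).const_mul a).fun_neg
    exact (hlin.exp.sub ((hasDerivAt_sqRamp x).const_mul (a ^ 2 * exp (-a) / 2))).congr_deriv
      (by ring)
  refine Monotone.convexOn_univ_of_deriv (fun x => (hderiv x).differentiableAt) ?_
  rw [funext fun x => (hderiv x).deriv]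
  exact (antitone_exp_neg_mul_add_unitClamp ha).const_mul_of_nonpos (neg_nonpos.2 ha)

lemma integral_exp_neg_mul_sub_sqRamp {a : ℝ} (ha : 0 < a) :
    ∫ x in Icc (0 : ℝ) 1, (exp (-(a * x)) - a ^ 2 * exp (-a) / 2 * sqRamp x)
      = (1 - exp (-a)) / a - a ^ 2 * exp (-a) / 6 := by
  have hexp : ∫ x in (0 : ℝ)..1, exp (-(a * x)) = (1 - exp (-a)) / a := by
    rw [intervalIntegral.integral_comp_mul_left (fun y => exp (-y)) ha.ne',
      intervalIntegral.integral_comp_neg]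
    simp only [mul_one, mul_zero, neg_zero, integral_exp, exp_zero, smul_eq_mul]
    field_simp
  rw [integral_Icc_eq_integral_Ioc, ← intervalIntegral.integral_of_le zero_le_one,
    intervalIntegral.integral_sub, intervalIntegral.integral_const_mul, hexp,
    integral_sqRamp_zero_one]
  · ring
  · exact (continuous_exp.comp (continuous_const.mul continuous_id).neg).intervalIntegrable 0 1
  · exact (continuous_const.mul continuous_sqRamp).intervalIntegrable 0 1

lemma Fin.natCast_mul_le_sum_of_le_sum_div {n : ℕ} {f : Fin n → ℝ} {t : ℝ}
    (h : t ≤ (∑ i, f i) / n) : n * t ≤ ∑ i, f i := by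
  rcases n.eq_zero_or_pos with rfl | hn
  · simp
  · rwa [le_div_iff₀' (by positivity)] at h

namespace SubUniform

variable {Ω : Type*} [MeasurableSpace Ω] {P : Measure Ω} {X : Ω → ℝ}

lemma integrable_sq (hX : SubUniform P X) : Integrable (fun ω => X ω ^ 2) P := by
  refine (hX (· ^ 2) (Even.convexOn_pow even_two)
    ((integrable_zero Ω ℝ P).congr (ae_of_all _ fun ω => ?_))).1
  exact (max_eq_right (neg_nonpos.2 (sq_nonneg _))).symm

lemma integrable_comp_and_integral_comp_le [IsFiniteMeasure P] (hX : SubUniform P X)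
    (hXm : Measurable X) {h : ℝ → ℝ} (hh : ConvexOn ℝ univ h) {c d : ℝ}
    (hlow : ∀ x, -h x ≤ c * x ^ 2 + d) :
    Integrable (fun ω => h (X ω)) P ∧
      ∫ ω, h (X ω) ∂P ≤ ∫ x in Icc (0 : ℝ) 1, h x := by
  have hhm : Measurable h :=
    (continuousOn_univ.1 (hh.continuousOn isOpen_univ)).measurable
  refine hX h hh (((hX.integrable_sq.const_mul |c|).add (integrable_const |d|)).mono'
    ((hhm.comp hXm).neg.max measurable_const).aestronglyMeasurable (ae_of_all _ fun ω => ?_))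
  rw [norm_of_nonneg (le_max_right _ _)]
  show _ ≤ |c| * X ω ^ 2 + |d|
  refine max_le ((hlow _).trans ?_) (by positivity)
  gcongr
  · exact le_abs_self c
  · exact le_abs_self d

lemma integral_eq_half [IsProbabilityMeasure P] (hX : SubUniform P X) (hXm : Measurable X) :
    ∫ ω, X ω ∂P = 1 / 2 := by
  have hmean : ∫ x in Icc (0 : ℝ) 1, x = 1 / 2 := by
    rw [integral_Icc_eq_integral_Ioc, ← intervalIntegral.integral_of_le zero_le_one, integral_id]
    norm_num
  have hle := (hX.integrable_comp_and_integral_comp_le hXm (convexOn_id convex_univ) (c := 1)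
    (d := 1) fun x => by simp only [id_eq]; nlinarith [sq_nonneg (x - 1 / 2)]).2
  have hge := (hX.integrable_comp_and_integral_comp_le hXm (concaveOn_id convex_univ).neg (c := 1)
    (d := 1) fun x => by
      simp only [Pi.neg_apply, id_eq, neg_neg]; nlinarith [sq_nonneg (x + 1 / 2)]).2
  simp only [id_eq, Pi.neg_apply] at hle hge
  rw [integral_neg, integral_neg, hmean] at hge
  rw [hmean] at hle
  linarith

lemma integral_sq_eq [IsProbabilityMeasure P] (hX : SubUniform P X) (hXm : Measurable X) :
    ∫ ω, X ω ^ 2 ∂P = variance X P + 1 / 4 := by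
  have hmem : MemLp X 2 P :=
    (memLp_two_iff_integrable_sq hXm.aestronglyMeasurable).2 hX.integrable_sq
  rw [variance_eq_sub hmem, hX.integral_eq_half hXm]
  norm_num

lemma integral_exp_neg_mul_le [IsFiniteMeasure P] (hX : SubUniform P X) (hXm : Measurable X)
    {a : ℝ} (ha : 0 < a) :
    Integrable (fun ω => exp (-(a * X ω))) P ∧
      ∫ ω, exp (-(a * X ω)) ∂P
        ≤ (1 - exp (-a)) / a + a ^ 2 * exp (-a) / 2 * (∫ ω, X ω ^ 2 ∂P - 1 / 3) := by
  have hk0 : 0 ≤ a ^ 2 * exp (-a) / 2 := by positivity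
  obtain ⟨hconvInt, hconvLe⟩ := hX.integrable_comp_and_integral_comp_le hXm
    (convexOn_exp_neg_mul_sub_sqRamp ha.le) (c := a ^ 2 * exp (-a) / 2) (d := 0)
    fun x => by linarith [exp_pos (-(a * x)), mul_le_mul_of_nonneg_left (sqRamp_le_sq x) hk0]
  set k := a ^ 2 * exp (-a) / 2
  have hrampInt : Integrable (fun ω => sqRamp (X ω)) P :=
    hX.integrable_sq.mono' (continuous_sqRamp.measurable.comp hXm).aestronglyMeasurable
      (ae_of_all _ fun ω => by rw [norm_of_nonneg (sqRamp_nonneg _)]; exact sqRamp_le_sq _)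
  have hsplit : (fun ω => exp (-(a * X ω)))
      = fun ω => (exp (-(a * X ω)) - k * sqRamp (X ω)) + k * sqRamp (X ω) := by
    ext; ring
  refine ⟨hsplit ▸ hconvInt.add (hrampInt.const_mul k), ?_⟩
  calc ∫ ω, exp (-(a * X ω)) ∂P
      = ∫ ω, (exp (-(a * X ω)) - k * sqRamp (X ω)) ∂P + k * ∫ ω, sqRamp (X ω) ∂P := by
        rw [hsplit, integral_add hconvInt (hrampInt.const_mul k), integral_const_mul]
    _ ≤ ((1 - exp (-a)) / a - a ^ 2 * exp (-a) / 6) + k * ∫ ω, X ω ^ 2 ∂P :=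
        add_le_add (hconvLe.trans_eq (integral_exp_neg_mul_sub_sqRamp ha))
          (mul_le_mul_of_nonneg_left
            (integral_mono hrampInt hX.integrable_sq fun ω => sqRamp_le_sq _) hk0)
    _ = _ := by ring

lemma mgf_standardized_le [IsProbabilityMeasure P] (hX : SubUniform P X) (hXm : Measurable X)
    {σ s : ℝ} (hσ : variance X P = σ ^ 2) (hσpos : 0 < σ) (hs : 0 < s) :
    Integrable (fun ω => exp (s * ((1 / 2 - X ω) / σ))) P ∧
      mgf (fun ω => (1 / 2 - X ω) / σ) P s ≤ exp (-(s / (2 * σ))) *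
        ((exp (s / σ) - 1) / (s / σ) + s ^ 2 * (1 / 2 - 1 / (24 * σ ^ 2))) := by
  obtain ⟨hint, hle⟩ := hX.integral_exp_neg_mul_le hXm (div_pos hs hσpos)
  set E := exp (s / (2 * σ)) with hE
  have hfactor : (fun ω => exp (s * ((1 / 2 - X ω) / σ)))
      = fun ω => E * exp (-(s / σ * X ω)) := by
    ext ω
    rw [hE, ← exp_add]
    congr 1
    field_simp
    ring
  refine ⟨hfactor ▸ hint.const_mul E, ?_⟩
  have hE2 : exp (s / σ) = E * E := by rw [hE, ← exp_add]; congr 1; ring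
  rw [hX.integral_sq_eq hXm, hσ] at hle
  rw [mgf, hfactor, integral_const_mul]
  calc E * ∫ ω, exp (-(s / σ * X ω)) ∂P
      ≤ E * ((1 - exp (-(s / σ))) / (s / σ)
          + (s / σ) ^ 2 * exp (-(s / σ)) / 2 * (σ ^ 2 + 1 / 4 - 1 / 3)) := by
        gcongr
    _ = _ := by
        have hE0 : E ≠ 0 := (exp_pos _).ne'
        simp only [exp_neg, hE2, ← hE]
        field_simp
        ring

end SubUniform

end

open ProbabilityTheory in
theorem subUniform_standardized_avg_chernoff_general {Ω : Type*} [MeasurableSpace Ω]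
    (P : Measure Ω) [IsProbabilityMeasure P] (n : ℕ)
    (X : Fin n → Ω → ℝ) (hmeas : ∀ i, Measurable (X i))
    (hind : iIndepFun X P)
    (hsub : ∀ i, SubUniform P (X i))
    (σ : Fin n → ℝ) (hσ : ∀ i, σ i = Real.sqrt (variance (X i) P))
    (hσpos : ∀ i, 0 < σ i)
    (t : ℝ) (s : ℝ) (hs : 0 < s) :
    P {ω | (∑ i, (1/2 - X i ω) / σ i) / n ≥ t} ≤
      ENNReal.ofReal (∏ i, Real.exp (-(s * (t + 1 / (2 * σ i)))) *
        ((Real.exp (s / σ i) - 1) / (s / σ i) + s ^ 2 * (1/2 - 1 / (24 * σ i ^ 2)))) := by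
  set Y : Fin n → Ω → ℝ := fun i ω => (1 / 2 - X i ω) / σ i
  have hYmeas : ∀ i, Measurable (Y i) := fun i => (measurable_const.sub (hmeas i)).div_const _
  have hYind : iIndepFun Y P :=
    hind.comp _ fun i => (measurable_const.sub measurable_id).div_const _
  have hYmgf i := (hsub i).mgf_standardized_le (hmeas i)
    (by rw [hσ i, sq_sqrt (variance_nonneg _ _)]) (hσpos i) hs
  have hint := hYind.integrable_exp_mul_sum (s := Finset.univ) hYmeas fun i _ => (hYmgf i).1
  calc P {ω | (∑ i, (1 / 2 - X i ω) / σ i) / n ≥ t}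
      ≤ P {ω | n * t ≤ (∑ i, Y i) ω} :=
        measure_mono fun ω hω => by
          rw [mem_ofPred_eq, Finset.sum_apply]
          exact Fin.natCast_mul_le_sum_of_le_sum_div hω
    _ = ENNReal.ofReal (P.real {ω | n * t ≤ (∑ i, Y i) ω}) := (ofReal_measureReal).symm
    _ ≤ ENNReal.ofReal (exp (-s * (n * t)) * ∏ i, mgf (Y i) P s) := by
        rw [← hYind.mgf_sum hYmeas]
        exact ENNReal.ofReal_le_ofReal (measure_ge_le_exp_mul_mgf _ hs.le hint)
    _ = ENNReal.ofReal (∏ i, exp (-(s * t)) * mgf (Y i) P s) := by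
        rw [Finset.prod_mul_distrib, Finset.prod_const, Finset.card_univ, Fintype.card_fin,
          ← exp_nat_mul]
        ring_nf
    _ ≤ _ := by
        refine ENNReal.ofReal_le_ofReal (Finset.prod_le_prod
          (fun i _ => mul_nonneg (exp_pos _).le mgf_nonneg) fun i _ => ?_)
        rw [show s * (t + 1 / (2 * σ i)) = s * t + s / (2 * σ i) by ring, neg_add, exp_add,
          mul_assoc]
        exact mul_le_mul_of_nonneg_left (hYmgf i).2 (exp_pos _).le

open ProbabilityTheory in
/-- Let `X₁, …, Xₙ` be independent sub-uniform random variables with (strictly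
positive) standard deviations `σ₁, …, σₙ`, and let `Ȳₙ = n⁻¹ ∑ᵢ (1/2 − Xᵢ)/σᵢ`.
Then for every `t ≥ 0` and every `s > 0`,
`P(Ȳₙ ≥ t) ≤ ∏ᵢ exp[−s{t + 1/(2σᵢ)}] {(e^{s/σᵢ} − 1)/(s/σᵢ) + s²(1/2 − 1/(24σᵢ²))}`. -/
theorem subUniform_standardized_avg_chernoff {Ω : Type*} [MeasurableSpace Ω]
    (P : Measure Ω) [IsProbabilityMeasure P] (n : ℕ) (hn : 0 < n)
    (X : Fin n → Ω → ℝ) (hmeas : ∀ i, Measurable (X i))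
    (hind : iIndepFun X P)
    (hsub : ∀ i, SubUniform P (X i))
    (σ : Fin n → ℝ) (hσ : ∀ i, σ i = Real.sqrt (variance (X i) P))
    (hσpos : ∀ i, 0 < σ i)
    (t : ℝ) (ht : 0 ≤ t) (s : ℝ) (hs : 0 < s) :
    P {ω | (∑ i, (1/2 - X i ω) / σ i) / n ≥ t} ≤
      ENNReal.ofReal (∏ i, Real.exp (-(s * (t + 1 / (2 * σ i)))) *
        ((Real.exp (s / σ i) - 1) / (s / σ i) + s ^ 2 * (1/2 - 1 / (24 * σ i ^ 2)))) :=
  subUniform_standardized_avg_chernoff_general P n X hmeas hind hsub σ hσ hσpos t s hs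
end

section
/- If X is a sub-uniform random variable (so that X ∈ (0,1] almost surely), then for every λ with 0 < λ < 1, E[X^{−λ}] ≤ 1/(1 − λ). -/
open MeasureTheory Set

/-- The truncated approximation to `x ↦ x^(-l)`: equal to `x^(-l)` for `x ≥ c`, and given
by the tangent line at `c` for `x ≤ c`. -/
noncomputable def gfun (l c x : ℝ) : ℝ :=
  if x ≤ c then c ^ (-l) + l * c ^ (-l - 1) * (c - x) else x ^ (-l)

lemma gfun_nonneg {l c : ℝ} (hl0 : 0 < l) (hc : 0 < c) (x : ℝ) : 0 ≤ gfun l c x := by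
  unfold gfun
  split_ifs with h
  · have h1 : (0:ℝ) ≤ c ^ (-l) := Real.rpow_nonneg hc.le _
    have h2 : (0:ℝ) ≤ c ^ (-l - 1) := Real.rpow_nonneg hc.le _
    have h3 := mul_nonneg (mul_nonneg hl0.le h2) (sub_nonneg.2 h)
    linarith
  · exact Real.rpow_nonneg (le_of_lt (hc.trans (lt_of_not_ge h))) _

lemma gfun_lower {l c x : ℝ} (hl0 : 0 < l) (hc : 0 < c) (hx : x ≤ c) :
    c ^ (-l) ≤ gfun l c x := by
  unfold gfun
  rw [if_pos hx]
  have h2 : (0:ℝ) ≤ c ^ (-l - 1) := Real.rpow_nonneg hc.le _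
  have h3 := mul_nonneg (mul_nonneg hl0.le h2) (sub_nonneg.2 hx)
  linarith

lemma hasDerivAt_gfun {l c : ℝ} (hl0 : 0 < l) (hc : 0 < c) (x : ℝ) :
    HasDerivAt (gfun l c) (-(l * (max x c) ^ (-l - 1))) x := by
  have hL : ∀ y : ℝ, HasDerivAt (fun z => c ^ (-l) + l * c ^ (-l - 1) * (c - z))
      (-(l * c ^ (-l - 1))) y := by
    intro y
    have h1 : HasDerivAt (fun z : ℝ => c - z) (-1) y := (hasDerivAt_id y).const_sub c
    have h2 := (h1.const_mul (l * c ^ (-l - 1))).const_add (c ^ (-l))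
    simpa using h2
  have hR : ∀ y : ℝ, y ≠ 0 → HasDerivAt (fun z : ℝ => z ^ (-l)) (-(l * y ^ (-l - 1))) y := by
    intro y hy
    have := Real.hasDerivAt_rpow_const (x := y) (p := -l) (Or.inl hy)
    convert this using 1
    ring
  rcases lt_trichotomy x c with h | heq | h
  · rw [max_eq_right h.le]
    refine (hL x).congr_of_eventuallyEq ?_
    filter_upwards [Iio_mem_nhds h] with y hy
    simp [gfun, (mem_Iio.1 hy).le]
  · subst heq
    rw [max_self]
    have h1 : HasDerivWithinAt (gfun l x) (-(l * x ^ (-l - 1))) (Iic x) x := by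
      refine ((hL x).hasDerivWithinAt).congr (fun y hy => ?_) ?_
      · simp [gfun, (mem_Iic.1 hy)]
      · simp [gfun]
    have h2 : HasDerivWithinAt (gfun l x) (-(l * x ^ (-l - 1))) (Ici x) x := by
      refine ((hR x hc.ne').hasDerivWithinAt).congr (fun y hy => ?_) ?_
      · rcases eq_or_lt_of_le (mem_Ici.1 hy) with rfl | hlt
        · simp [gfun]
        · simp [gfun, not_le.2 hlt]
      · simp [gfun]
    have := h1.union h2
    rwa [Iic_union_Ici, hasDerivWithinAt_univ] at this
  · rw [max_eq_left h.le]
    refine (hR x (ne_of_gt (hc.trans h))).congr_of_eventuallyEq ?_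
    filter_upwards [Ioi_mem_nhds h] with y hy
    simp [gfun, not_le.2 (mem_Ioi.1 hy)]

lemma continuous_gfun {l c : ℝ} (hl0 : 0 < l) (hc : 0 < c) : Continuous (gfun l c) :=
  continuous_iff_continuousAt.2 fun x =>
    (hasDerivAt_gfun hl0 hc x).differentiableAt.continuousAt

lemma convexOn_gfun {l c : ℝ} (hl0 : 0 < l) (hc : 0 < c) : ConvexOn ℝ univ (gfun l c) := by
  have hdiff : Differentiable ℝ (gfun l c) := fun x =>
    (hasDerivAt_gfun hl0 hc x).differentiableAt
  refine Monotone.convexOn_univ_of_deriv hdiff ?_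
  intro x y hxy
  rw [(hasDerivAt_gfun hl0 hc x).deriv, (hasDerivAt_gfun hl0 hc y).deriv]
  have h1 : (0:ℝ) < max x c := lt_of_lt_of_le hc (le_max_right _ _)
  have h2 : max x c ≤ max y c := max_le_max hxy le_rfl
  have h3 : (max y c) ^ (-l - 1) ≤ (max x c) ^ (-l - 1) :=
    Real.rpow_le_rpow_of_nonpos h1 h2 (by linarith)
  have h4 := mul_le_mul_of_nonneg_left h3 hl0.le
  linarith

/-- The tangent line at `c` lies below the convex function `x ↦ x ^ (-l)` on `(0, ∞)`. -/
lemma gfun_le {l c x : ℝ} (hl0 : 0 < l) (hc : 0 < c) (hx : 0 < x) :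
    gfun l c x ≤ x ^ (-l) := by
  rcases le_or_gt x c with h | h
  · rcases eq_or_lt_of_le h with rfl | hlt
    · simp [gfun]
    · obtain ⟨ξ, hξ, hslope⟩ := exists_hasDerivAt_eq_slope (fun t : ℝ => t ^ (-l))
        (fun t => -l * t ^ (-l - 1)) hlt
        (fun t ht => ((Real.continuousAt_rpow_const t (-l)
          (Or.inl (ne_of_gt (lt_of_lt_of_le hx ht.1)))).continuousWithinAt))
        (fun t ht => by
          have := Real.hasDerivAt_rpow_const (x := t) (p := -l)
            (Or.inl (ne_of_gt (hx.trans ht.1)))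
          convert this using 1)
      have hξ0 : 0 < ξ := hx.trans hξ.1
      have hcx : (0:ℝ) < c - x := by linarith
      have heq : c ^ (-l) - x ^ (-l) = -l * ξ ^ (-l - 1) * (c - x) := by
        field_simp at hslope
        linarith [hslope]
      have h3 : c ^ (-l - 1) ≤ ξ ^ (-l - 1) :=
        Real.rpow_le_rpow_of_nonpos hξ0 hξ.2.le (by linarith)
      have h4 : l * c ^ (-l - 1) * (c - x) ≤ l * ξ ^ (-l - 1) * (c - x) := by
        have := mul_le_mul_of_nonneg_left h3 hl0.le
        exact mul_le_mul_of_nonneg_right this hcx.le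
      unfold gfun
      rw [if_pos h]
      nlinarith
  · unfold gfun
    rw [if_neg (not_le.2 h)]

/-- `gfun` is antitone in the truncation parameter. -/
lemma gfun_anti {l a b x : ℝ} (hl0 : 0 < l) (hb : 0 < b) (hba : b ≤ a) :
    gfun l a x ≤ gfun l b x := by
  have ha : 0 < a := hb.trans_le hba
  by_cases hxa : x ≤ a
  · by_cases hxb : x ≤ b
    · have h1 : gfun l a b ≤ b ^ (-l) := gfun_le hl0 ha hb
      unfold gfun at h1 ⊢
      rw [if_pos hba] at h1
      rw [if_pos hxa, if_pos hxb]
      have h2 : a ^ (-l - 1) ≤ b ^ (-l - 1) :=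
        Real.rpow_le_rpow_of_nonpos hb hba (by linarith)
      have h3 : (0:ℝ) ≤ (b ^ (-l - 1) - a ^ (-l - 1)) * (b - x) * l :=
        mul_nonneg (mul_nonneg (by linarith) (by linarith)) hl0.le
      nlinarith
    · have h1 : gfun l a x ≤ x ^ (-l) := gfun_le hl0 ha (hb.trans (not_le.1 hxb))
      unfold gfun
      rw [if_neg hxb, if_pos hxa]
      unfold gfun at h1
      rwa [if_pos hxa] at h1
  · have hxb : ¬ x ≤ b := fun hcon => hxa (hcon.trans hba)
    unfold gfun
    rw [if_neg hxa, if_neg hxb]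

lemma integral_gfun_le {l c : ℝ} (hl0 : 0 < l) (hl1 : l < 1) (hc : 0 < c) :
    ∫ x in Icc (0:ℝ) 1, gfun l c x ∂volume ≤ 1 / (1 - l) := by
  have hintg : IntegrableOn (gfun l c) (Ioc (0:ℝ) 1) volume :=
    (continuous_gfun hl0 hc).integrableOn_Ioc
  have hintf : IntegrableOn (fun x : ℝ => x ^ (-l)) (Ioc (0:ℝ) 1) volume := by
    have := intervalIntegral.intervalIntegrable_rpow' (a := 0) (b := 1)
      (show (-1:ℝ) < -l by linarith)
    rwa [intervalIntegrable_iff_integrableOn_Ioc_of_le zero_le_one] at this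
  calc ∫ x in Icc (0:ℝ) 1, gfun l c x ∂volume
      = ∫ x in Ioc (0:ℝ) 1, gfun l c x ∂volume := integral_Icc_eq_integral_Ioc
    _ ≤ ∫ x in Ioc (0:ℝ) 1, x ^ (-l) ∂volume := by
        refine setIntegral_mono_on hintg hintf measurableSet_Ioc fun x hx =>
          gfun_le hl0 hc hx.1
    _ = ∫ x in (0:ℝ)..1, x ^ (-l) := (intervalIntegral.integral_of_le zero_le_one).symm
    _ = 1 / (1 - l) := by
        rw [integral_rpow (Or.inl (by linarith : (-1:ℝ) < -l))]
        rw [Real.one_rpow, Real.zero_rpow (by linarith : -l + 1 ≠ 0)]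
        rw [show -l + 1 = 1 - l by ring]
        norm_num

/-- Every value of `|x ^ (-l)|` is eventually dominated by the approximations. -/
lemma exists_gfun_ge {l : ℝ} (hl0 : 0 < l) (x : ℝ) :
    ∃ n : ℕ, |x ^ (-l)| ≤ gfun l (1 / (n + 1)) x := by
  rcases le_or_gt x 0 with hx | hx
  · set M := |x ^ (-l)| with hM
    have hM0 : 0 ≤ M := abs_nonneg _
    obtain ⟨n, hn⟩ := exists_nat_gt (M ^ (1 / l))
    refine ⟨n, ?_⟩
    have hc : (0:ℝ) < 1 / (n + 1) := by positivity
    have hxc : x ≤ 1 / (n + 1) := hx.trans hc.le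
    have h1 : (1 / ((n:ℝ) + 1)) ^ (-l) ≤ gfun l (1 / (n + 1)) x :=
      gfun_lower hl0 hc hxc
    have h2 : M ≤ (1 / ((n:ℝ) + 1)) ^ (-l) := by
      have ht0 : (0:ℝ) ≤ M ^ (1 / l) := Real.rpow_nonneg hM0 _
      have hle : M ^ (1 / l) ≤ (n:ℝ) + 1 := le_of_lt (hn.trans (lt_add_one _))
      have h4 : (1 / ((n:ℝ) + 1)) ^ (-l) = ((n:ℝ) + 1) ^ l := by
        rw [one_div, Real.inv_rpow (by positivity), Real.rpow_neg (by positivity), inv_inv]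
      rw [h4]
      calc M = M ^ ((1/l) * l) := by
              rw [one_div_mul_cancel hl0.ne', Real.rpow_one]
        _ = (M ^ (1/l)) ^ l := Real.rpow_mul hM0 _ _
        _ ≤ ((n:ℝ) + 1) ^ l := Real.rpow_le_rpow ht0 hle hl0.le
    exact h2.trans h1
  · obtain ⟨n, hn⟩ := exists_nat_gt x⁻¹
    refine ⟨n, ?_⟩
    have h2 : x⁻¹ < (n:ℝ) + 1 := hn.trans (lt_add_one _)
    have h3 : 1 / ((n:ℝ) + 1) < x := by
      rw [div_lt_iff₀ (by positivity)]
      have := mul_lt_mul_of_pos_left h2 hx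
      rw [mul_inv_cancel₀ hx.ne'] at this
      linarith
    rw [abs_of_nonneg (Real.rpow_nonneg hx.le _)]
    unfold gfun
    rw [if_neg (not_le.2 h3)]

/-- If `X` is a sub-uniform random variable (so that `X ∈ (0,1]` almost surely),
then for every `λ` with `0 < λ < 1`, `E[X^{−λ}] ≤ 1/(1 − λ)`. -/
theorem subUniform_neg_moment_le {Ω : Type*} [MeasurableSpace Ω] (P : Measure Ω)
    [IsProbabilityMeasure P] (X : Ω → ℝ) (hX : Measurable X) (hsub : SubUniform P X)
    (l : ℝ) (hl0 : 0 < l) (hl1 : l < 1) :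
    ∫ ω, X ω ^ (-l) ∂P ≤ 1 / (1 - l) := by
  have hc : ∀ n : ℕ, (0:ℝ) < 1 / (n + 1) := fun n => by positivity
  set g : ℕ → ℝ → ℝ := fun n x => gfun l (1 / (n + 1)) x with hg
  -- apply sub-uniformity to each convex approximation
  have key : ∀ n : ℕ, Integrable (fun ω => g n (X ω)) P ∧
      ∫ ω, g n (X ω) ∂P ≤ ∫ x in Icc (0:ℝ) 1, g n x ∂volume := by
    intro n
    refine hsub (g n) (convexOn_gfun hl0 (hc n)) ?_
    have : (fun ω => max (-(g n (X ω))) 0) = fun _ => (0:ℝ) := by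
      funext ω
      exact max_eq_right (neg_nonpos.2 (gfun_nonneg hl0 (hc n) _))
    rw [this]
    exact integrable_const 0
  have hb : ∀ n : ℕ, ∫ ω, g n (X ω) ∂P ≤ 1 / (1 - l) := fun n =>
    (key n).2.trans (integral_gfun_le hl0 hl1 (hc n))
  have hbound : (0:ℝ) ≤ 1 / (1 - l) := by
    have : (0:ℝ) < 1 - l := by linarith
    positivity
  -- measurability of x ↦ x ^ (-l)
  have hmeasrpow : Measurable fun x : ℝ => x ^ (-l) := by
    refine measurable_of_continuousOn_compl_singleton (0:ℝ) ?_
    intro x hx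
    exact (Real.continuousAt_rpow_const x (-l) (Or.inl hx)).continuousWithinAt
  have hmeasf : Measurable fun ω => X ω ^ (-l) := hmeasrpow.comp hX
  have hmeasg : ∀ n : ℕ, Measurable fun ω => g n (X ω) := fun n =>
    ((continuous_gfun hl0 (hc n)).measurable).comp hX
  -- monotone convergence bound on the lintegral of |X ^ (-l)|
  have hmono : ∀ ω : Ω, Monotone fun n : ℕ => g n (X ω) := by
    intro ω m n hmn
    refine gfun_anti hl0 (hc n) ?_
    have h1 : (m:ℝ) + 1 ≤ (n:ℝ) + 1 := by
      have : (m:ℝ) ≤ n := Nat.cast_le.2 hmn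
      linarith
    exact one_div_le_one_div_of_le (by positivity) h1
  have hlin : ∫⁻ ω, ENNReal.ofReal |X ω ^ (-l)| ∂P ≤ ENNReal.ofReal (1 / (1 - l)) := by
    have h1 : ∀ ω, ENNReal.ofReal |X ω ^ (-l)| ≤ ⨆ n, ENNReal.ofReal (g n (X ω)) := by
      intro ω
      obtain ⟨n, hn⟩ := exists_gfun_ge hl0 (X ω)
      exact le_trans (ENNReal.ofReal_le_ofReal hn) (le_iSup (fun n => ENNReal.ofReal (g n (X ω))) n)
    calc ∫⁻ ω, ENNReal.ofReal |X ω ^ (-l)| ∂P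
        ≤ ∫⁻ ω, ⨆ n, ENNReal.ofReal (g n (X ω)) ∂P := lintegral_mono h1
      _ = ⨆ n, ∫⁻ ω, ENNReal.ofReal (g n (X ω)) ∂P :=
          lintegral_iSup (fun n => (hmeasg n).ennreal_ofReal)
            (fun m n hmn ω => ENNReal.ofReal_le_ofReal (hmono ω hmn))
      _ ≤ ENNReal.ofReal (1 / (1 - l)) := by
          refine iSup_le fun n => ?_
          rw [← ofReal_integral_eq_lintegral_ofReal (key n).1
            (Filter.Eventually.of_forall fun ω => gfun_nonneg hl0 (hc n) _)]
          exact ENNReal.ofReal_le_ofReal (hb n)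
  -- conclude
  calc ∫ ω, X ω ^ (-l) ∂P
      ≤ |∫ ω, X ω ^ (-l) ∂P| := le_abs_self _
    _ ≤ ∫ ω, |X ω ^ (-l)| ∂P := by
        simpa [Real.norm_eq_abs] using
          norm_integral_le_integral_norm (μ := P) (fun ω => X ω ^ (-l))
    _ = (∫⁻ ω, ENNReal.ofReal |X ω ^ (-l)| ∂P).toReal := by
        rw [integral_eq_lintegral_of_nonneg_ae
          (Filter.Eventually.of_forall fun ω => abs_nonneg _)
          hmeasf.abs.aestronglyMeasurable]
    _ ≤ 1 / (1 - l) := ENNReal.toReal_le_of_le_ofReal hbound hlin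
end

section
/- Let μ₀ and μ₁ be probability measures on ℝ (the laws of a test statistic T under the null and the alternative), and suppose μ₁ is stochastically larger than μ₀, i.e. μ₁((t,∞)) ≥ μ₀((t,∞)) for all t. Define the p-value map p(t) = μ₀([t,∞)) and the mid-p map q(t) = (1/2)·μ₀([t,∞)) + (1/2)·μ₀((t,∞)), and let P = p(T), Q = q(T). If there exist x ∈ [0,1] and ε > 0 with P₁(P ≤ x) ≥ x + ε (probabilities under T ~ μ₁), then E₀[Q] − E₁[Q] ≥ ε²/2, where E₀ and E₁ denote expectations under T ~ μ₀ and T ~ μ₁ respectively. -/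
open MeasureTheory Set

/-!
Swapping the order of integration (Tonelli on `{s ≤ t}` and `{s < t}` in `ℝ × ℝ`) turns
`E₀[Q] - E₁[Q]` into `½ ∫ (μ₁[u,∞) - μ₀[u,∞)) + (μ₁(u,∞) - μ₀(u,∞)) dμ₀(u)`, whose integrand is
nonnegative by stochastic dominance. The rejection region `R = {p ≤ x}` is an upper set, so with
`c = μ₁ R ≥ x + ε` the integrand is at least `(c - μ₀[u,∞))⁺ + (c - μ₀(u,∞))⁺` off `R`: a
trapezoid-rule value of the convex function `(c - ·)⁺` across the jump of the survival function
of `μ₀` at `u`. As `u` runs through `Rᶜ` these jumps tile `[μ₀ R, 1]`, so the trapezoid values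
integrate to at least `2 ∫_{μ₀ R}^1 (c - v)⁺ dv = (c - μ₀ R)²`, and super-uniformity of p-values
(`μ₀ R ≤ x`) gives `c - μ₀ R ≥ ε`.
-/

theorem integral_measureReal_preimage_prodMk_comm {β γ : Type*} [MeasurableSpace β]
    [MeasurableSpace γ] (μ : Measure β) (ν : Measure γ) [IsFiniteMeasure μ] [IsFiniteMeasure ν]
    {s : Set (β × γ)} (hs : MeasurableSet s) :
    ∫ x, ν.real (Prod.mk x ⁻¹' s) ∂μ = ∫ y, μ.real ((·, y) ⁻¹' s) ∂ν := by
  simp only [measureReal_def]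
  rw [integral_toReal (measurable_measure_prodMk_left hs).aemeasurable
      (ae_of_all _ fun _ => measure_lt_top _ _),
    integral_toReal (measurable_measure_prodMk_right hs).aemeasurable
      (ae_of_all _ fun _ => measure_lt_top _ _),
    ← Measure.prod_apply hs, Measure.prod_apply_symm hs]

theorem IsUpperSet.subset_Ioi_of_notMem {α : Type*} [LinearOrder α] {R : Set α}
    (hR : IsUpperSet R) {u : α} (hu : u ∉ R) : R ⊆ Ioi u :=
  fun _ hv => lt_of_not_ge fun hvu => hu (hR hvu hv)

section SurvivalFunction

variable {α : Type*} [LinearOrder α] [MeasurableSpace α] (μ : Measure α)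

theorem isUpperSet_setOf_measureReal_Ici_le [IsFiniteMeasure μ] (s : ℝ) :
    IsUpperSet {u | μ.real (Ici u) ≤ s} :=
  fun _ _ hab ha => (measureReal_mono (Ici_subset_Ici.2 hab)).trans ha

theorem isUpperSet_setOf_measureReal_Ioi_le [IsFiniteMeasure μ] (s : ℝ) :
    IsUpperSet {u | μ.real (Ioi u) ≤ s} :=
  fun _ _ hab ha => (measureReal_mono (Ioi_subset_Ioi hab)).trans ha

variable [TopologicalSpace α] [OrderTopology α]

section SecondCountable

variable [SecondCountableTopology α]

theorem IsUpperSet.measure_eq_iSup_Ici {L : Set α} (hL : IsUpperSet L) :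
    μ L = ⨆ b : L, μ (Ici (b : α)) := by
  have : OrdConnected L := hL.ordConnected
  rw [← Antitone.measure_iUnion (s := fun b : L => Ici (b : α)) fun _ _ h => Ici_subset_Ici.2 h]
  congr 1
  ext u
  simp only [mem_iUnion, mem_Ici]
  exact ⟨fun hu => ⟨⟨u, hu⟩, le_rfl⟩, fun ⟨b, hb⟩ => hL hb b.2⟩

theorem IsLowerSet.measure_eq_iSup_Iic {L : Set α} (hL : IsLowerSet L) :
    μ L = ⨆ b : L, μ (Iic (b : α)) := by
  have : OrdConnected L := hL.ordConnected
  rw [← Monotone.measure_iUnion (s := fun b : L => Iic (b : α)) fun _ _ h => Iic_subset_Iic.2 h]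
  congr 1
  ext u
  simp only [mem_iUnion, mem_Iic]
  exact ⟨fun hu => ⟨⟨u, hu⟩, le_rfl⟩, fun ⟨b, hb⟩ => hL hb b.2⟩

theorem measure_Ici_eq_iInf_Ioi [OpensMeasurableSpace α] [DenselyOrdered α] [NoMinOrder α]
    [IsFiniteMeasure μ] (t : α) : μ (Ici t) = ⨅ s : Iio t, μ (Ioi (s : α)) := by
  obtain ⟨s₀, hs₀⟩ := exists_lt t
  rw [← Antitone.measure_iInter (s := fun s : Iio t => Ioi (s : α))
    (fun _ _ h => Ioi_subset_Ioi h) (fun _ => measurableSet_Ioi.nullMeasurableSet)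
    ⟨⟨s₀, hs₀⟩, measure_ne_top _ _⟩]
  congr 1
  ext u
  simp only [mem_iInter, mem_Ioi, mem_Ici, Subtype.forall, mem_Iio]
  exact forall_lt_iff_le.symm

theorem measure_Ici_le_of_forall_measure_Ioi_le [OpensMeasurableSpace α] [DenselyOrdered α]
    [NoMinOrder α] [IsFiniteMeasure μ] (ν : Measure α) [IsFiniteMeasure ν]
    (h : ∀ t, μ (Ioi t) ≤ ν (Ioi t)) (t : α) : μ (Ici t) ≤ ν (Ici t) := by
  rw [measure_Ici_eq_iInf_Ioi, measure_Ici_eq_iInf_Ioi]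
  exact iInf_mono fun s => h s

variable [IsFiniteMeasure μ]

theorem IsUpperSet.measureReal_le_of_forall_Ici_le {L : Set α} (hL : IsUpperSet L) {m : ℝ}
    (hm : 0 ≤ m) (h : ∀ b ∈ L, μ.real (Ici b) ≤ m) : μ.real L ≤ m := by
  rw [measureReal_def, hL.measure_eq_iSup_Ici]
  refine ENNReal.toReal_le_of_le_ofReal hm (iSup_le fun b => ?_)
  exact (ENNReal.le_ofReal_iff_toReal_le (measure_ne_top _ _) hm).2 (h b b.2)

theorem IsLowerSet.measureReal_le_of_forall_Iic_le {L : Set α} (hL : IsLowerSet L) {m : ℝ}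
    (hm : 0 ≤ m) (h : ∀ b ∈ L, μ.real (Iic b) ≤ m) : μ.real L ≤ m := by
  rw [measureReal_def, hL.measure_eq_iSup_Iic]
  refine ENNReal.toReal_le_of_le_ofReal hm (iSup_le fun b => ?_)
  exact (ENNReal.le_ofReal_iff_toReal_le (measure_ne_top _ _) hm).2 (h b b.2)

theorem measureReal_setOf_measureReal_Ici_le {s : ℝ} (hs : 0 ≤ s) :
    μ.real {u | μ.real (Ici u) ≤ s} ≤ s :=
  (isUpperSet_setOf_measureReal_Ici_le μ s).measureReal_le_of_forall_Ici_le μ hs fun _ hb => hb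

theorem le_measureReal_setOf_measureReal_Ioi_le [OpensMeasurableSpace α] {s : ℝ}
    (hs : s ≤ μ.real univ) : s ≤ μ.real {u | μ.real (Ioi u) ≤ s} := by
  have hU := isUpperSet_setOf_measureReal_Ioi_le μ s
  have hUc : μ.real {u | μ.real (Ioi u) ≤ s}ᶜ ≤ μ.real univ - s := by
    refine hU.compl.measureReal_le_of_forall_Iic_le μ (sub_nonneg.2 hs) fun b hb => ?_
    have := measureReal_add_measureReal_compl (μ := μ) (measurableSet_Iic (a := b))
    rw [compl_Iic] at this
    simp only [mem_compl_iff, mem_ofPred_eq, not_le] at hb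
    linarith
  rw [measureReal_compl hU.ordConnected.measurableSet] at hUc
  linarith

end SecondCountable

variable [BorelSpace α] [IsFiniteMeasure μ]

theorem Monotone.integrable_measureReal {s : α → Set α} (hs : Monotone s)
    (ν : Measure α) [IsFiniteMeasure ν] : Integrable (fun t => μ.real (s t)) ν :=
  .of_bound (Monotone.measurable fun _ _ h => measureReal_mono (hs h)).aestronglyMeasurable
    (μ.real univ) (ae_of_all _ fun _ => by
      rw [Real.norm_of_nonneg measureReal_nonneg]; exact measureReal_mono (subset_univ _))

theorem Antitone.integrable_measureReal {s : α → Set α} (hs : Antitone s)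
    (ν : Measure α) [IsFiniteMeasure ν] : Integrable (fun t => μ.real (s t)) ν :=
  .of_bound (Antitone.measurable fun _ _ h => measureReal_mono (hs h)).aestronglyMeasurable
    (μ.real univ) (ae_of_all _ fun _ => by
      rw [Real.norm_of_nonneg measureReal_nonneg]; exact measureReal_mono (subset_univ _))

theorem integrable_measureReal_Ici_add_Ioi (ν : Measure α) [IsFiniteMeasure ν] :
    Integrable (fun t => μ.real (Ici t) + μ.real (Ioi t)) ν :=
  (antitone_Ici.integrable_measureReal μ ν).add (antitone_Ioi.integrable_measureReal μ ν)

theorem integrable_max_sub_measureReal_Ici_add_Ioi (c : ℝ) (ν : Measure α) [IsFiniteMeasure ν] :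
    Integrable (fun u => max (c - μ.real (Ici u)) 0 + max (c - μ.real (Ioi u)) 0) ν :=
  ((integrable_const c).sub (antitone_Ici.integrable_measureReal μ ν)).pos_part.add
    ((integrable_const c).sub (antitone_Ioi.integrable_measureReal μ ν)).pos_part

variable [SecondCountableTopology α] (ν : Measure α) [IsFiniteMeasure ν]

theorem integral_measureReal_Ici_eq_integral_measureReal_Iic :
    ∫ t, ν.real (Ici t) ∂μ = ∫ u, μ.real (Iic u) ∂ν :=
  integral_measureReal_preimage_prodMk_comm μ ν (measurableSet_le measurable_fst measurable_snd)

theorem integral_measureReal_Ioi_eq_integral_measureReal_Iio :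
    ∫ t, ν.real (Ioi t) ∂μ = ∫ u, μ.real (Iio u) ∂ν :=
  integral_measureReal_preimage_prodMk_comm μ ν (measurableSet_lt measurable_fst measurable_snd)

theorem integral_measureReal_Ici_add_Ioi_add_swap :
    ∫ t, (ν.real (Ici t) + ν.real (Ioi t)) ∂μ + ∫ u, (μ.real (Ici u) + μ.real (Ioi u)) ∂ν
      = 2 * (μ.real univ * ν.real univ) := by
  have hsplit : ∀ u, μ.real (Iic u) + μ.real (Iio u) + (μ.real (Ici u) + μ.real (Ioi u))
      = 2 * μ.real univ := fun u => by
    have h1 := measureReal_add_measureReal_compl (μ := μ) (measurableSet_Iic (a := u))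
    have h2 := measureReal_add_measureReal_compl (μ := μ) (measurableSet_Iio (a := u))
    rw [compl_Iic] at h1
    rw [compl_Iio] at h2
    linarith
  have hIic := monotone_Iic.integrable_measureReal μ ν
  have hIio := monotone_Iio.integrable_measureReal μ ν
  have hlower : Integrable (fun u => μ.real (Iic u) + μ.real (Iio u)) ν := hIic.add hIio
  rw [integral_add (antitone_Ici.integrable_measureReal ν μ)
      (antitone_Ioi.integrable_measureReal ν μ),
    integral_measureReal_Ici_eq_integral_measureReal_Iic,
    integral_measureReal_Ioi_eq_integral_measureReal_Iio, ← integral_add hIic hIio,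
    ← integral_add hlower (integrable_measureReal_Ici_add_Ioi μ ν)]
  simp only [hsplit, integral_const, smul_eq_mul]
  ring

theorem integral_measureReal_Ici_add_Ioi_sub_integral (h : μ univ = ν univ) :
    ∫ t, (μ.real (Ici t) + μ.real (Ioi t)) ∂μ - ∫ t, (μ.real (Ici t) + μ.real (Ioi t)) ∂ν
      = ∫ u, (ν.real (Ici u) + ν.real (Ioi u) - (μ.real (Ici u) + μ.real (Ioi u))) ∂μ := by
  have hμμ := integral_measureReal_Ici_add_Ioi_add_swap μ μ
  have hμν := integral_measureReal_Ici_add_Ioi_add_swap ν μ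
  have hmass : μ.real univ = ν.real univ := by rw [measureReal_def, h, measureReal_def]
  rw [integral_sub (integrable_measureReal_Ici_add_Ioi ν μ)
    (integrable_measureReal_Ici_add_Ioi μ μ)]
  rw [← hmass] at hμν
  linarith

theorem IsUpperSet.setIntegral_measureReal_Ici_add_Ioi {L : Set α} (hL : IsUpperSet L) :
    ∫ u in L, (μ.real (Ici u) + μ.real (Ioi u)) ∂μ = μ.real L ^ 2 := by
  have hLm := hL.ordConnected.measurableSet
  have hrestrict : ∀ s ⊆ L, MeasurableSet s → μ.real s = (μ.restrict L).real s := fun s hs hsm => by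
    rw [measureReal_restrict_apply hsm, inter_eq_left.2 hs]
  have key := integral_measureReal_Ici_add_Ioi_add_swap (μ.restrict L) (μ.restrict L)
  rw [measureReal_restrict_apply_univ] at key
  rw [setIntegral_congr_fun hLm fun u hu => by
    rw [hrestrict _ (hL.Ici_subset hu) measurableSet_Ici,
      hrestrict _ (hL.Ioi_subset hu) measurableSet_Ioi]]
  linarith

theorem IsUpperSet.setIntegral_max_sub_measureReal_Ici_add_Ioi {L : Set α} (hL : IsUpperSet L)
    {c : ℝ} (hLc : ∀ u ∈ L, μ.real (Ici u) ≤ c) :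
    ∫ u in L, (max (c - μ.real (Ici u)) 0 + max (c - μ.real (Ioi u)) 0) ∂μ
      = 2 * c * μ.real L - μ.real L ^ 2 := by
  rw [setIntegral_congr_fun hL.ordConnected.measurableSet
      (g := fun u => 2 * c - (μ.real (Ici u) + μ.real (Ioi u))) fun u hu => by
        have hIci := hLc u hu
        have hIoi : μ.real (Ioi u) ≤ c := (measureReal_mono Ioi_subset_Ici_self).trans hIci
        simp only [max_eq_left (sub_nonneg.2 hIci), max_eq_left (sub_nonneg.2 hIoi)]
        ring,
    integral_sub (integrable_const (2 * c)) (integrable_measureReal_Ici_add_Ioi μ μ).integrableOn,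
    setIntegral_const, hL.setIntegral_measureReal_Ici_add_Ioi μ, smul_eq_mul]
  ring

theorem sq_le_integral_max_sub_measureReal_Ici_add_Ioi {c : ℝ} (hc0 : 0 ≤ c)
    (hc : c ≤ μ.real univ) :
    c ^ 2 ≤ ∫ u, (max (c - μ.real (Ici u)) 0 + max (c - μ.real (Ioi u)) 0) ∂μ := by
  set F : α → ℝ := fun u => max (c - μ.real (Ici u)) 0 + max (c - μ.real (Ioi u)) 0
  set L := {u | μ.real (Ici u) ≤ c}
  set U := {u | μ.real (Ioi u) ≤ c}
  have hL := isUpperSet_setOf_measureReal_Ici_le μ c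
  have hLm := hL.ordConnected.measurableSet
  have hUm := (isUpperSet_setOf_measureReal_Ioi_le μ c).ordConnected.measurableSet
  have hLU : L ⊆ U := fun u hu => (measureReal_mono Ioi_subset_Ici_self).trans hu
  have hLc : μ.real L ≤ c := measureReal_setOf_measureReal_Ici_le μ hc0
  have hUc : c ≤ μ.real U := le_measureReal_setOf_measureReal_Ioi_le μ hc
  have hFint : Integrable F μ := integrable_max_sub_measureReal_Ici_add_Ioi μ c μ
  have hFL : ∫ u in L, F u ∂μ = 2 * c * μ.real L - μ.real L ^ 2 :=
    hL.setIntegral_max_sub_measureReal_Ici_add_Ioi μ fun _ hu => hu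
  have hFUL : (c - μ.real L) * (μ.real U - μ.real L) ≤ ∫ u in U \ L, F u ∂μ := by
    have hge : ∀ u ∈ U \ L, c - μ.real L ≤ F u := fun u hu => by
      -- every point strictly to the right of `u ∈ U` lies in `L`
      have hIoi : μ.real (Ioi u) ≤ μ.real L :=
        measureReal_mono fun v hv => (measureReal_mono (Ici_subset_Ioi.2 hv)).trans hu.1
      have := le_max_left (c - μ.real (Ioi u)) 0
      have := le_max_right (c - μ.real (Ici u)) 0
      linarith
    have := setIntegral_ge_of_const_le (hUm.diff hLm) (measure_ne_top _ _) hge hFint.integrableOn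
    rwa [measureReal_sdiff hLU hLm, smul_eq_mul, mul_comm] at this
  calc c ^ 2 ≤ 2 * c * μ.real L - μ.real L ^ 2 + (c - μ.real L) * (μ.real U - μ.real L) := by
        nlinarith
    _ ≤ ∫ u in L, F u ∂μ + ∫ u in U \ L, F u ∂μ := by rw [hFL]; linarith
    _ = ∫ u in U, F u ∂μ := by
        rw [← setIntegral_union disjoint_sdiff_right (hUm.diff hLm) hFint.integrableOn
          hFint.integrableOn, union_sdiff_cancel hLU]
    _ ≤ ∫ u, F u ∂μ := setIntegral_le_integral hFint
        (ae_of_all _ fun _ => add_nonneg (le_max_right _ _) (le_max_right _ _))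

theorem IsUpperSet.sq_sub_le_setIntegral_compl_max_sub_measureReal {R : Set α}
    (hR : IsUpperSet R) {c : ℝ} (hRc : μ.real R ≤ c) (hc : c ≤ μ.real univ) :
    (c - μ.real R) ^ 2
      ≤ ∫ u in Rᶜ, (max (c - μ.real (Ici u)) 0 + max (c - μ.real (Ioi u)) 0) ∂μ := by
  have hRm := hR.ordConnected.measurableSet
  have hshift : ∀ s, R ⊆ s → MeasurableSet s → μ.real s = μ.real R + (μ.restrict Rᶜ).real s :=
    fun s hs hsm => by
      rw [measureReal_restrict_apply hsm, ← measureReal_inter_add_sdiff (s := s) hRm,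
        inter_eq_right.2 hs, sdiff_eq]
  refine (sq_le_integral_max_sub_measureReal_Ici_add_Ioi (μ.restrict Rᶜ) (sub_nonneg.2 hRc)
    ?_).trans_eq (setIntegral_congr_fun hRm.compl fun u hu => ?_)
  · rw [measureReal_restrict_apply_univ, measureReal_compl hRm]
    linarith
  · have hRu := hR.subset_Ioi_of_notMem hu
    rw [hshift _ hRu measurableSet_Ioi, hshift _ (hRu.trans Ioi_subset_Ici_self) measurableSet_Ici,
      sub_add_eq_sub_sub, sub_add_eq_sub_sub]

theorem IsUpperSet.sq_measureReal_sub_le_integral_measureReal_Ici_add_Ioi_sub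
    [DenselyOrdered α] [NoMinOrder α] (ν : Measure α) [IsFiniteMeasure ν]
    (hst : ∀ t, μ (Ioi t) ≤ ν (Ioi t)) {R : Set α} (hR : IsUpperSet R)
    (hRR : μ.real R ≤ ν.real R) (hνR : ν.real R ≤ μ.real univ) :
    (ν.real R - μ.real R) ^ 2
      ≤ ∫ u, (ν.real (Ici u) + ν.real (Ioi u) - (μ.real (Ici u) + μ.real (Ioi u))) ∂μ := by
  have hdom (u : α) : μ.real (Ici u) ≤ ν.real (Ici u) ∧ μ.real (Ioi u) ≤ ν.real (Ioi u) :=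
    ⟨ENNReal.toReal_mono (measure_ne_top _ _) (measure_Ici_le_of_forall_measure_Ioi_le μ ν hst u),
      ENNReal.toReal_mono (measure_ne_top _ _) (hst u)⟩
  have hgap : ∀ u ∈ Rᶜ, max (ν.real R - μ.real (Ici u)) 0 + max (ν.real R - μ.real (Ioi u)) 0
      ≤ ν.real (Ici u) + ν.real (Ioi u) - (μ.real (Ici u) + μ.real (Ioi u)) := fun u hu => by
    have hIoi : ν.real R ≤ ν.real (Ioi u) := measureReal_mono (hR.subset_Ioi_of_notMem hu)
    have hIci : ν.real (Ioi u) ≤ ν.real (Ici u) := measureReal_mono Ioi_subset_Ici_self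
    obtain ⟨h₀, h₁⟩ := hdom u
    calc _ ≤ (ν.real (Ici u) - μ.real (Ici u)) + (ν.real (Ioi u) - μ.real (Ioi u)) :=
          add_le_add (max_le (by linarith) (by linarith)) (max_le (by linarith) (by linarith))
      _ = _ := by ring
  have hgint :=
    (integrable_measureReal_Ici_add_Ioi ν μ).sub (integrable_measureReal_Ici_add_Ioi μ μ)
  calc (ν.real R - μ.real R) ^ 2
      ≤ ∫ u in Rᶜ, (max (ν.real R - μ.real (Ici u)) 0 + max (ν.real R - μ.real (Ioi u)) 0) ∂μ :=
        hR.sq_sub_le_setIntegral_compl_max_sub_measureReal μ hRR hνR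
    _ ≤ ∫ u in Rᶜ, (ν.real (Ici u) + ν.real (Ioi u) - (μ.real (Ici u) + μ.real (Ioi u))) ∂μ :=
        setIntegral_mono_on (integrable_max_sub_measureReal_Ici_add_Ioi μ _ μ).integrableOn
          hgint.integrableOn hR.ordConnected.measurableSet.compl hgap
    _ ≤ _ := setIntegral_le_integral hgint
        (ae_of_all _ fun u => sub_nonneg.2 (add_le_add (hdom u).1 (hdom u).2))

end SurvivalFunction

/-- Let `μ₀` and `μ₁` be probability measures on `ℝ` (the laws of a test statistic `T`
under the null and alternative hypotheses), with `μ₁` stochastically larger than `μ₀`.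
Let `p(t) = μ₀[t,∞)` be the p-value map and
`q(t) = (1/2) μ₀[t,∞) + (1/2) μ₀(t,∞)` the mid-p-value map.  If there exist
`x ∈ [0,1]` and `ε > 0` with `P₁(p(T) ≤ x) ≥ x + ε`, then
`E₀[q(T)] − E₁[q(T)] ≥ ε²/2`. -/
theorem midP_mean_gap (μ₀ μ₁ : Measure ℝ) [IsProbabilityMeasure μ₀]
    [IsProbabilityMeasure μ₁]
    (hst : ∀ t : ℝ, μ₀ (Set.Ioi t) ≤ μ₁ (Set.Ioi t))
    (p q : ℝ → ℝ)
    (hp : ∀ t, p t = (μ₀ (Set.Ici t)).toReal)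
    (hq : ∀ t, q t = (1/2) * (μ₀ (Set.Ici t)).toReal + (1/2) * (μ₀ (Set.Ioi t)).toReal)
    (x : ℝ) (hx : x ∈ Set.Icc (0:ℝ) 1) (ε : ℝ) (hε : 0 < ε)
    (hdetect : ENNReal.ofReal (x + ε) ≤ μ₁ {t | p t ≤ x}) :
    ε ^ 2 / 2 ≤ ∫ t, q t ∂μ₀ - ∫ t, q t ∂μ₁ := by
  set R := {t | p t ≤ x}
  have hpR : R = {u | μ₀.real (Ici u) ≤ x} := by simp only [R, hp, measureReal_def]
  have hR : IsUpperSet R := hpR ▸ isUpperSet_setOf_measureReal_Ici_le μ₀ x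
  have hRx : μ₀.real R ≤ x := hpR ▸ measureReal_setOf_measureReal_Ici_le μ₀ hx.1
  have hRc : x + ε ≤ μ₁.real R :=
    (ENNReal.ofReal_le_iff_le_toReal (measure_ne_top _ _)).1 hdetect
  have hq' : q = fun t => (μ₀.real (Ici t) + μ₀.real (Ioi t)) / 2 :=
    funext fun t => by rw [hq, measureReal_def, measureReal_def]; ring
  rw [hq', integral_div, integral_div, ← sub_div,
    integral_measureReal_Ici_add_Ioi_sub_integral μ₀ μ₁ (by simp)]
  gcongr
  calc ε ^ 2 ≤ (μ₁.real R - μ₀.real R) ^ 2 := pow_le_pow_left₀ hε.le (by linarith) 2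
    _ ≤ _ := hR.sq_measureReal_sub_le_integral_measureReal_Ici_add_Ioi_sub μ₀ μ₁ hst
        (by linarith) (by simp)
end
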